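/- arXiv:1812.04133 — 6 statements merged into one kernel-verified Lean document; each statement's English description precedes it below -/
import Mathlib

section
/- Let p be an odd prime and let H be a subgroup of GL₂(𝔽_p) of index 2. Then the image of H under the determinant map is a proper subgroup of 𝔽_p^×. -/
open Matrix

variable {K : Type*} [Field K]

/-- upper transvection -/
def upT (t : K) : GL (Fin 2) K :=
  ⟨!![1, t; 0, 1], !![1, -t; 0, 1],
    by simp [Matrix.mul_fin_two, Matrix.one_fin_two],
    by simp [Matrix.mul_fin_two, Matrix.one_fin_two]⟩

/-- lower transvection -/
def lowT (t : K) : GL (Fin 2) K :=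
  ⟨!![1, 0; t, 1], !![1, 0; -t, 1],
    by simp [Matrix.mul_fin_two, Matrix.one_fin_two],
    by simp [Matrix.mul_fin_two, Matrix.one_fin_two]⟩

lemma upT_mul (s t : K) : upT s * upT t = upT (s + t) := by
  ext i j
  fin_cases i <;> fin_cases j <;> simp [upT, Matrix.mul_fin_two, add_comm]

lemma lowT_mul (s t : K) : lowT s * lowT t = lowT (s + t) := by
  ext i j
  fin_cases i <;> fin_cases j <;> simp [lowT, Matrix.mul_fin_two, add_comm]

lemma lowT_zero : (lowT 0 : GL (Fin 2) K) = 1 := by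
  ext i j
  fin_cases i <;> fin_cases j <;> simp [lowT, Matrix.one_fin_two]

lemma upT_mem (h2 : (2 : K) ≠ 0) (H : Subgroup (GL (Fin 2) K)) (hH : H.index = 2) (t : K) :
    upT t ∈ H := by
  have : upT (t / 2) * upT (t / 2) = upT (t : K) := by
    rw [upT_mul]; congr 1; field_simp; ring
  rw [← this]
  exact Subgroup.mul_self_mem_of_index_two hH _

lemma lowT_mem (h2 : (2 : K) ≠ 0) (H : Subgroup (GL (Fin 2) K)) (hH : H.index = 2) (t : K) :
    lowT t ∈ H := by
  have : lowT (t / 2) * lowT (t / 2) = lowT (t : K) := by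
    rw [lowT_mul]; congr 1; field_simp; ring
  rw [← this]
  exact Subgroup.mul_self_mem_of_index_two hH _

/-- every det-1 matrix with nonzero lower-left entry is a product of three transvections -/
lemma decomp (g : GL (Fin 2) K) (hdet : Matrix.det (g : Matrix (Fin 2) (Fin 2) K) = 1)
    (hc : (g : Matrix (Fin 2) (Fin 2) K) 1 0 ≠ 0) :
    g = upT (((g : Matrix (Fin 2) (Fin 2) K) 0 0 - 1) / (g : Matrix (Fin 2) (Fin 2) K) 1 0) *
        lowT ((g : Matrix (Fin 2) (Fin 2) K) 1 0) *
        upT (((g : Matrix (Fin 2) (Fin 2) K) 1 1 - 1) / (g : Matrix (Fin 2) (Fin 2) K) 1 0) := by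
  have hbc : (g : Matrix (Fin 2) (Fin 2) K) 0 0 * (g : Matrix (Fin 2) (Fin 2) K) 1 1 -
      (g : Matrix (Fin 2) (Fin 2) K) 0 1 * (g : Matrix (Fin 2) (Fin 2) K) 1 0 = 1 := by
    rw [← Matrix.det_fin_two]; exact hdet
  ext i j
  simp only [Units.val_mul, upT, lowT, Matrix.mul_fin_two]
  fin_cases i <;> fin_cases j <;> simp only [Fin.mk_zero, Fin.mk_one, Fin.isValue, Matrix.of_apply, Matrix.cons_val', Matrix.cons_val_zero, Matrix.cons_val_one, Matrix.empty_val', Matrix.cons_val_fin_one] <;> field_simp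
  · ring
  · linear_combination -hbc
  · ring
  · ring

lemma det_one_mem (h2 : (2 : K) ≠ 0) (H : Subgroup (GL (Fin 2) K)) (hH : H.index = 2)
    (g : GL (Fin 2) K) (hdet : Matrix.det (g : Matrix (Fin 2) (Fin 2) K) = 1) : g ∈ H := by
  by_cases hc : (g : Matrix (Fin 2) (Fin 2) K) 1 0 ≠ 0
  · rw [decomp g hdet hc]
    exact H.mul_mem (H.mul_mem (upT_mem h2 H hH _) (lowT_mem h2 H hH _)) (upT_mem h2 H hH _)
  · push_neg at hc
    set g' := g * lowT 1 with hg'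
    have hd : (g : Matrix (Fin 2) (Fin 2) K) 1 1 ≠ 0 := by
      intro h
      rw [Matrix.det_fin_two, hc, h] at hdet
      simp at hdet
    have hcoe : (g' : Matrix (Fin 2) (Fin 2) K) 1 0 = (g : Matrix (Fin 2) (Fin 2) K) 1 1 := by
      rw [hg']
      simp [lowT, Matrix.mul_apply, Fin.sum_univ_two, hc]
    have hdet' : Matrix.det (g' : Matrix (Fin 2) (Fin 2) K) = 1 := by
      rw [hg', Units.val_mul, Matrix.det_mul, hdet]
      simp [lowT, Matrix.det_fin_two]
    have hg'mem : g' ∈ H := by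
      rw [decomp g' hdet' (hcoe ▸ hd)]
      exact H.mul_mem (H.mul_mem (upT_mem h2 H hH _) (lowT_mem h2 H hH _)) (upT_mem h2 H hH _)
    have : g = g' * lowT (-1) := by
      rw [hg', mul_assoc, lowT_mul]
      simp [lowT_zero]
    rw [this]
    exact H.mul_mem hg'mem (lowT_mem h2 H hH _)

/-- Let `p` be an odd prime and `H` a subgroup of `GL₂(𝔽_p)` of index 2. Then the image of `H`
under the determinant map is a proper subgroup of `𝔽_p^×`. -/
theorem stmt0 (p : ℕ) (hp : p.Prime) (hodd : Odd p)
    (H : Subgroup (Matrix.GeneralLinearGroup (Fin 2) (ZMod p)))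
    (hH : H.index = 2) :
    Subgroup.map (Matrix.GeneralLinearGroup.det) H ≠ (⊤ : Subgroup (ZMod p)ˣ) := by
  haveI : Fact p.Prime := ⟨hp⟩
  have h2 : (2 : ZMod p) ≠ 0 := by
    intro h
    have h2' : (p : ℕ) ∣ 2 := by
      haveI : NeZero p := ⟨hp.pos.ne'⟩
      exact (ZMod.natCast_eq_zero_iff 2 p).mp (by exact_mod_cast h)
    have := (Nat.prime_dvd_prime_iff_eq hp Nat.prime_two).mp h2'
    subst this
    exact absurd hodd (by decide)
  intro htop
  have hHtop : H = ⊤ := by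
    rw [eq_top_iff]
    intro g _
    have : Matrix.GeneralLinearGroup.det g ∈ Subgroup.map Matrix.GeneralLinearGroup.det H := by
      rw [htop]; trivial
    obtain ⟨h, hhH, hdh⟩ := this
    have hdet1 : Matrix.GeneralLinearGroup.det (g * h⁻¹) = 1 := by
      rw [_root_.map_mul, _root_.map_inv, ← hdh, mul_inv_cancel]
    have hmdet : Matrix.det ((g * h⁻¹ : GL (Fin 2) (ZMod p)) : Matrix (Fin 2) (Fin 2) (ZMod p))
        = 1 := by
      have := congrArg Units.val hdet1
      simpa using this
    have : g = (g * h⁻¹) * h := by group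
    rw [this]
    exact H.mul_mem (det_one_mem h2 H hH _ hmdet) hhH
  rw [hHtop] at hH
  simp at hH
end

section
/- Let p ≥ 5 be a prime and let H be a subgroup of SL₂(ℤ/p²ℤ) whose image under the reduction homomorphism SL₂(ℤ/p²ℤ) → SL₂(ℤ/pℤ) is all of SL₂(ℤ/pℤ). Then H = SL₂(ℤ/p²ℤ). -/
section scalars
variable {p : ℕ} (hp : p.Prime) (h5 : 5 ≤ p)

local notation "R" => ZMod (p^2)
local notation "F" => ZMod p

lemma red_eq_val (t : ZMod (p^2)) [NeZero p] : (ZMod.castHom (dvd_pow_self p two_ne_zero) (ZMod p)) t = ((t.val : ℕ) : ZMod p) := by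
  haveI : NeZero (p^2) := ⟨pow_ne_zero 2 (NeZero.ne p)⟩
  rw [ZMod.castHom_apply, ← ZMod.natCast_val]

include hp in
lemma pmul_eq_zero_iff (t : ZMod (p^2)) :
    (p : ZMod (p^2)) * t = 0 ↔ (ZMod.castHom (dvd_pow_self p two_ne_zero) (ZMod p)) t = 0 := by
  haveI : NeZero p := ⟨hp.ne_zero⟩
  haveI : NeZero (p^2) := ⟨pow_ne_zero 2 hp.ne_zero⟩
  rw [red_eq_val, ZMod.natCast_eq_zero_iff]
  conv_lhs => rw [show t = ((t.val : ℕ) : ZMod (p^2)) by rw [ZMod.natCast_val, ZMod.cast_id]]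
  rw [← Nat.cast_mul, ZMod.natCast_eq_zero_iff]
  generalize t.val = m
  rw [pow_two]
  exact mul_dvd_mul_iff_left (a := (p:ℕ)) (Nat.Prime.ne_zero hp)

include hp in
lemma pmul_congr {s s' : ZMod (p^2)}
    (h : (ZMod.castHom (dvd_pow_self p two_ne_zero) (ZMod p)) s
       = (ZMod.castHom (dvd_pow_self p two_ne_zero) (ZMod p)) s') :
    (p : ZMod (p^2)) * s = (p : ZMod (p^2)) * s' := by
  have : (p : ZMod (p^2)) * (s - s') = 0 := by
    rw [pmul_eq_zero_iff hp, map_sub, h, sub_self]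
  linear_combination this

include hp in
lemma exists_p_mul {t : ZMod (p^2)}
    (h : (ZMod.castHom (dvd_pow_self p two_ne_zero) (ZMod p)) t = 0) :
    ∃ s : ZMod (p^2), t = (p : ZMod (p^2)) * s := by
  haveI : NeZero p := ⟨hp.ne_zero⟩
  haveI : NeZero (p^2) := ⟨pow_ne_zero 2 hp.ne_zero⟩
  rw [red_eq_val, ZMod.natCast_eq_zero_iff] at h
  obtain ⟨k, hk⟩ := h
  exact ⟨(k : ZMod (p^2)), by rw [show t = ((t.val : ℕ) : ZMod (p^2)) by rw [ZMod.natCast_val, ZMod.cast_id], hk]; push_cast; ring⟩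

lemma pp_zero' : True := trivial

omit hp h5 in
lemma pp_zero : (p : ZMod (p^2)) * (p : ZMod (p^2)) = 0 := by
  rw [← Nat.cast_mul, ← pow_two, ZMod.natCast_self]

end scalars

open Finset in
lemma sumsq_int : ∀ n : ℕ, (∑ i ∈ range n, (i:ℤ)^2) * 6 = n * (n - 1) * (2*n - 1)
  | 0 => by simp
  | (n+1) => by
    rw [sum_range_succ, add_mul, sumsq_int n]
    push_cast
    ring

section sums
variable {p : ℕ} (hp : p.Prime) (h5 : 5 ≤ p)
open Finset

include h5 in
lemma two_ne_zero_F : (2 : ZMod p) ≠ 0 := by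
  intro h0
  rw [show (2:ZMod p) = ((2:ℕ):ZMod p) by push_cast; ring,
    ZMod.natCast_eq_zero_iff] at h0
  exact absurd (Nat.le_of_dvd two_pos h0) (by omega)

include hp h5 in
lemma six_ne_zero_F : (6 : ZMod p) ≠ 0 := by
  intro h0
  rw [show (6:ZMod p) = ((6:ℕ):ZMod p) by push_cast; ring,
    ZMod.natCast_eq_zero_iff] at h0
  have h6 := Nat.le_of_dvd (by norm_num) h0
  interval_cases p <;> simp_all (config := {decide := true})

include hp h5 in
lemma sum_id_F : (∑ i ∈ range p, (i : ZMod p)) = 0 := by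
  haveI := Fact.mk hp
  have h := congrArg (Nat.cast : ℕ → ZMod p) (Finset.sum_range_id_mul_two p)
  push_cast at h
  rw [ZMod.natCast_self] at h
  simp only [zero_mul] at h
  exact (mul_eq_zero.mp h).resolve_right (two_ne_zero_F h5)

include hp h5 in
lemma sum_sq_F : (∑ i ∈ range p, (i : ZMod p)^2) = 0 := by
  haveI := Fact.mk hp
  have h := congrArg (Int.cast : ℤ → ZMod p) (sumsq_int p)
  push_cast at h
  rw [ZMod.natCast_self] at h
  simp only [zero_mul, zero_sub, mul_zero] at h
  exact (mul_eq_zero.mp h).resolve_right (six_ne_zero_F hp h5)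
end sums

section matrices
variable {p : ℕ} (hp : p.Prime)

/-- reduction on matrices -/
def redM (p : ℕ) : Matrix (Fin 2) (Fin 2) (ZMod (p^2)) →+* Matrix (Fin 2) (Fin 2) (ZMod p) :=
  (ZMod.castHom (dvd_pow_self p two_ne_zero) (ZMod p)).mapMatrix

lemma redM_apply (A : Matrix (Fin 2) (Fin 2) (ZMod (p^2))) (i j : Fin 2) :
    redM p A i j = (ZMod.castHom (dvd_pow_self p two_ne_zero) (ZMod p)) (A i j) := rfl

lemma red_cast_roundtrip (a : ZMod p) [NeZero p] :
    (ZMod.castHom (dvd_pow_self p two_ne_zero) (ZMod p)) (ZMod.cast a : ZMod (p^2)) = a := by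
  rw [← ZMod.natCast_val, map_natCast, ZMod.natCast_zmod_val]

/-- `EE M = 1 + p • M̃`. -/
def EE (p : ℕ) (M : Matrix (Fin 2) (Fin 2) (ZMod p)) : Matrix (Fin 2) (Fin 2) (ZMod (p^2)) :=
  1 + (p : ZMod (p^2)) • M.map (ZMod.cast)

include hp in
lemma psmul_matrix_congr {A B : Matrix (Fin 2) (Fin 2) (ZMod (p^2))} (h : redM p A = redM p B) :
    (p : ZMod (p^2)) • A = (p : ZMod (p^2)) • B := by
  ext i j
  simp only [Matrix.smul_apply, smul_eq_mul]
  refine pmul_congr hp ?_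
  have h' : redM p A i j = redM p B i j := by rw [h]
  rwa [redM_apply, redM_apply] at h'

include hp in
lemma psmul_matrix_zero {A : Matrix (Fin 2) (Fin 2) (ZMod (p^2))} (h : redM p A = 0) :
    (p : ZMod (p^2)) • A = 0 := by
  have := psmul_matrix_congr hp (B := 0) (by simpa using h)
  simpa using this

lemma pp_smul_zero (A B : Matrix (Fin 2) (Fin 2) (ZMod (p^2))) :
    ((p : ZMod (p^2)) • A) * ((p : ZMod (p^2)) • B) = 0 := by
  rw [smul_mul_assoc, mul_smul_comm, smul_smul, ← Nat.cast_mul, ← pow_two, ZMod.natCast_self,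
    zero_smul]

lemma red_map_cast (M : Matrix (Fin 2) (Fin 2) (ZMod p)) [NeZero p] :
    redM p (M.map ZMod.cast) = M := by
  ext i j
  rw [redM_apply, Matrix.map_apply, red_cast_roundtrip]

include hp in
lemma EE_mul (M N : Matrix (Fin 2) (Fin 2) (ZMod p)) [NeZero p] :
    EE p M * EE p N = EE p (M + N) := by
  unfold EE
  have h0 := pp_smul_zero (p := p) (M.map ZMod.cast : Matrix (Fin 2) (Fin 2) (ZMod (p^2)))
    (N.map ZMod.cast : Matrix (Fin 2) (Fin 2) (ZMod (p^2)))
  have hadd : (p : ZMod (p^2)) • (M.map ZMod.cast : Matrix (Fin 2) (Fin 2) (ZMod (p^2)))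
      + (p : ZMod (p^2)) • (N.map ZMod.cast : Matrix (Fin 2) (Fin 2) (ZMod (p^2)))
      = (p : ZMod (p^2)) • ((M + N).map ZMod.cast : Matrix (Fin 2) (Fin 2) (ZMod (p^2))) := by
    rw [← smul_add]
    exact psmul_matrix_congr hp (by rw [map_add, red_map_cast, red_map_cast, red_map_cast])
  have expand : ∀ a b : Matrix (Fin 2) (Fin 2) (ZMod (p^2)),
      (1 + a) * (1 + b) = 1 + (a + b) + a * b := by intros; noncomm_ring
  rw [expand, h0, hadd, add_zero]

lemma red_EE (M : Matrix (Fin 2) (Fin 2) (ZMod p)) [NeZero p] :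
    redM p (EE p M) = 1 := by
  unfold EE
  rw [map_add, map_one, add_eq_left]
  ext i j
  rw [redM_apply, Matrix.smul_apply, smul_eq_mul, map_mul, map_natCast, ZMod.natCast_self,
    zero_mul]
  rfl

include hp in
lemma exists_EE {A : Matrix (Fin 2) (Fin 2) (ZMod (p^2))} (h : redM p A = 1) [NeZero p] :
    ∃ M : Matrix (Fin 2) (Fin 2) (ZMod p), A = EE p M := by
  have hent : ∀ i j, ∃ s : ZMod (p^2), (A - 1) i j = (p : ZMod (p^2)) * s := by
    intro i j
    refine exists_p_mul hp ?_
    have : redM p (A - 1) i j = 0 := by rw [map_sub, map_one, h, sub_self]; rfl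
    rwa [redM_apply] at this
  choose C hC using hent
  have hA : A = 1 + (p : ZMod (p^2)) • (Matrix.of C) := by
    ext i j
    have := hC i j
    simp only [Matrix.sub_apply] at this
    rw [Matrix.add_apply, Matrix.smul_apply, smul_eq_mul]
    rw [show ((Matrix.of C : Matrix (Fin 2) (Fin 2) (ZMod (p^2))) i j) = C i j from rfl]
    linear_combination this
  refine ⟨redM p (Matrix.of C), ?_⟩
  rw [hA]
  unfold EE
  congr 1
  exact psmul_matrix_congr hp (by rw [red_map_cast])

end matrices

section power
variable {p : ℕ} (hp : p.Prime) (h5 : 5 ≤ p)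
open Finset

lemma unipotent_pow {S : Type*} [Ring S] (a : S) (ha : a * a = 0) :
    ∀ n : ℕ, (1 + a)^n = 1 + n • a
  | 0 => by simp
  | (n+1) => by
    rw [pow_succ, unipotent_pow a ha n, add_mul, mul_add, mul_add, one_mul, mul_one,
      smul_mul_assoc, ha, smul_zero, add_smul, one_smul, one_mul]
    abel

lemma binomial_p (u B : Matrix (Fin 2) (Fin 2) (ZMod (p^2))) :
    ∀ n : ℕ, (u + (p : ZMod (p^2)) • B)^n
      = u^n + (p : ZMod (p^2)) • (∑ i ∈ range n, u^i * B * u^(n-1-i))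
  | 0 => by simp
  | (n+1) => by
    conv_lhs => rw [pow_succ, binomial_p u B n]
    have h1 : (u^n + (p : ZMod (p^2)) • (∑ i ∈ range n, u^i * B * u^(n-1-i)))
          * (u + (p : ZMod (p^2)) • B)
        = u^(n+1) + ((p : ZMod (p^2)) • (u^n * B)
          + (p : ZMod (p^2)) • ((∑ i ∈ range n, u^i * B * u^(n-1-i)) * u))
          + ((p : ZMod (p^2)) • (∑ i ∈ range n, u^i * B * u^(n-1-i)))
            * ((p : ZMod (p^2)) • B) := by
      rw [add_mul, mul_add, mul_add, ← pow_succ, mul_smul_comm, smul_mul_assoc]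
      abel
    rw [h1, pp_smul_zero, add_zero, ← smul_add]
    congr 1
    have hsum : (∑ i ∈ range n, u^i * B * u^(n-1-i)) * u
        = ∑ i ∈ range n, u^i * B * u^(n+1-1-i) := by
      rw [Finset.sum_mul]
      refine Finset.sum_congr rfl fun i hi => ?_
      have e : n - 1 - i + 1 = n + 1 - 1 - i := by
        have := Finset.mem_range.mp hi; omega
      rw [mul_assoc, ← pow_succ, e]
    rw [sum_range_succ, hsum]
    have : n + 1 - 1 - n = 0 := by omega
    rw [this, pow_zero, mul_one]
    abel


lemma exists_psmul {X : Matrix (Fin 2) (Fin 2) (ZMod (p^2))} (hp : p.Prime)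
    (h : redM p X = 0) :
    ∃ B : Matrix (Fin 2) (Fin 2) (ZMod (p^2)), X = (p : ZMod (p^2)) • B := by
  have hent : ∀ i j, ∃ s : ZMod (p^2), X i j = (p : ZMod (p^2)) * s := by
    intro i j
    refine exists_p_mul hp ?_
    have : redM p X i j = 0 := by rw [h]; rfl
    rwa [redM_apply] at this
  choose C hC using hent
  refine ⟨Matrix.of C, ?_⟩
  ext i j
  rw [Matrix.smul_apply, smul_eq_mul]
  exact hC i j

def uR (p : ℕ) : Matrix (Fin 2) (Fin 2) (ZMod (p^2)) := !![1,1;0,1]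
def eR (p : ℕ) : Matrix (Fin 2) (Fin 2) (ZMod (p^2)) := !![0,1;0,0]
def uF (p : ℕ) : Matrix (Fin 2) (Fin 2) (ZMod p) := !![1,1;0,1]
def eF (p : ℕ) : Matrix (Fin 2) (Fin 2) (ZMod p) := !![0,1;0,0]

lemma eR_sq : eR p * eR p = 0 := by
  ext i j
  fin_cases i <;> fin_cases j <;>
    simp [eR, Matrix.mul_apply, Fin.sum_univ_two]

lemma eF_sq : eF p * eF p = 0 := by
  ext i j
  fin_cases i <;> fin_cases j <;>
    simp [eF, Matrix.mul_apply, Fin.sum_univ_two]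

lemma uR_eq : uR p = 1 + eR p := by
  ext i j
  fin_cases i <;> fin_cases j <;>
    simp [uR, eR, Matrix.one_apply]

lemma uF_eq : uF p = 1 + eF p := by
  ext i j
  fin_cases i <;> fin_cases j <;>
    simp [uF, eF, Matrix.one_apply]

lemma uR_pow (n : ℕ) : (uR p)^n = 1 + (n : ZMod (p^2)) • eR p := by
  rw [uR_eq, unipotent_pow _ eR_sq, Nat.cast_smul_eq_nsmul]

lemma uF_pow (n : ℕ) : (uF p)^n = 1 + (n : ZMod p) • eF p := by
  rw [uF_eq, unipotent_pow _ eF_sq, Nat.cast_smul_eq_nsmul]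

lemma redM_uR [NeZero p] : redM p (uR p) = uF p := by
  ext i j
  fin_cases i <;> fin_cases j <;>
    simp [uR, uF, redM_apply, -ZMod.castHom_apply, map_one, map_zero]

lemma expand3 (x y : ZMod p) (Z : Matrix (Fin 2) (Fin 2) (ZMod p)) :
    (1 + x • eF p) * Z * (1 + y • eF p)
      = Z + x • (eF p * Z) + y • (Z * eF p) + (x*y) • (eF p * Z * eF p) := by
  rw [add_mul, one_mul, smul_mul_assoc, mul_add, mul_one, add_mul, mul_smul_comm,
    mul_smul_comm, smul_mul_assoc, smul_smul, mul_comm y x]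
  abel

include hp h5 in
lemma key_sum_zero (Z : Matrix (Fin 2) (Fin 2) (ZMod p)) :
    (∑ i ∈ range p, (uF p)^i * Z * (uF p)^(p-1-i)) = 0 := by
  haveI := Fact.mk hp
  have hterm : ∀ i, (uF p)^i * Z * (uF p)^(p-1-i)
      = Z + (i : ZMod p) • (eF p * Z) + ((p-1-i : ℕ) : ZMod p) • (Z * eF p)
        + ((i : ZMod p) * ((p-1-i : ℕ) : ZMod p)) • (eF p * Z * eF p) := by
    intro i
    rw [uF_pow, uF_pow, expand3]
  simp only [hterm]
  rw [Finset.sum_add_distrib, Finset.sum_add_distrib, Finset.sum_add_distrib]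
  have t1 : (∑ _i ∈ range p, Z) = 0 := by
    rw [Finset.sum_const, Finset.card_range, ← Nat.cast_smul_eq_nsmul (ZMod p),
      ZMod.natCast_self, zero_smul]
  have t2 : (∑ i ∈ range p, (i : ZMod p) • (eF p * Z)) = 0 := by
    rw [← Finset.sum_smul, sum_id_F hp h5, zero_smul]
  have t3 : (∑ i ∈ range p, ((p-1-i : ℕ) : ZMod p) • (Z * eF p)) = 0 := by
    rw [Finset.sum_range_reflect (fun i => ((i : ℕ) : ZMod p) • (Z * eF p)) p,
      ← Finset.sum_smul, sum_id_F hp h5, zero_smul]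
  have t4 : (∑ i ∈ range p, ((i : ZMod p) * ((p-1-i : ℕ) : ZMod p)) • (eF p * Z * eF p)) = 0 := by
    rw [← Finset.sum_smul]
    have hc : ∀ i ∈ range p, (i : ZMod p) * ((p-1-i : ℕ) : ZMod p)
        = -((i : ZMod p)) - ((i : ZMod p))^2 := by
      intro i hi
      have hi' := Finset.mem_range.mp hi
      have h1 : ((p-1-i : ℕ) : ZMod p) = ((p-1 : ℕ) : ZMod p) - (i : ZMod p) := by
        rw [Nat.cast_sub (by omega)]
      have h2 : ((p-1 : ℕ) : ZMod p) = -1 := by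
        rw [Nat.cast_sub (by omega), ZMod.natCast_self, Nat.cast_one, zero_sub]
      rw [h1, h2]
      ring
    rw [Finset.sum_congr rfl hc]
    rw [Finset.sum_sub_distrib, Finset.sum_neg_distrib,
      sum_id_F hp h5, sum_sq_F hp h5, neg_zero, sub_zero, zero_smul]
  rw [t1, t2, t3, t4]
  simp

include hp h5 in
lemma key_pow (A : Matrix (Fin 2) (Fin 2) (ZMod (p^2)))
    (hA : redM p A = uF p) :
    A^p = EE p (eF p) := by
  haveI : NeZero p := ⟨hp.ne_zero⟩
  have hred0 : redM p (A - uR p) = 0 := by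
    rw [map_sub, hA, redM_uR, sub_self]
  obtain ⟨B, hB⟩ := exists_psmul hp hred0
  have hA' : A = uR p + (p : ZMod (p^2)) • B := by rw [← hB]; abel
  rw [hA', binomial_p]
  have hT : redM p (∑ i ∈ range p, (uR p)^i * B * (uR p)^(p-1-i))
      = ∑ i ∈ range p, (uF p)^i * (redM p B) * (uF p)^(p-1-i) := by
    rw [map_sum]
    refine Finset.sum_congr rfl fun i _ => ?_
    rw [map_mul, map_mul, map_pow, map_pow, redM_uR]
  have hz : (p : ZMod (p^2)) • (∑ i ∈ range p, (uR p)^i * B * (uR p)^(p-1-i)) = 0 :=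
    psmul_matrix_zero hp (by rw [hT, key_sum_zero hp h5])
  rw [hz, add_zero, uR_pow]
  unfold EE
  congr 1
  refine psmul_matrix_congr hp ?_
  rw [red_map_cast]
  ext i j
  fin_cases i <;> fin_cases j <;>
    simp [eR, eF, redM_apply, -ZMod.castHom_apply, map_one, map_zero]

end power

section groups
open Matrix Matrix.SpecialLinearGroup

variable {p : ℕ} (hp : p.Prime) (h5 : 5 ≤ p)

local notation "SL2R" => Matrix.SpecialLinearGroup (Fin 2) (ZMod (p^2))
local notation "SL2F" => Matrix.SpecialLinearGroup (Fin 2) (ZMod p)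
local notation "π" => Matrix.SpecialLinearGroup.map
  (ZMod.castHom (dvd_pow_self p two_ne_zero) (ZMod p))

lemma coe_pi (x : Matrix.SpecialLinearGroup (Fin 2) (ZMod (p^2))) :
    ((π x : Matrix.SpecialLinearGroup (Fin 2) (ZMod p)) : Matrix (Fin 2) (Fin 2) (ZMod p))
      = redM p (x : Matrix (Fin 2) (Fin 2) (ZMod (p^2))) := rfl

variable (H : Subgroup (Matrix.SpecialLinearGroup (Fin 2) (ZMod (p^2))))

/-- the set of `M` such that `1 + pM` lies in `H` -/
def SS (p : ℕ) (H : Subgroup (Matrix.SpecialLinearGroup (Fin 2) (ZMod (p^2)))) :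
    Set (Matrix (Fin 2) (Fin 2) (ZMod p)) :=
  {M | ∃ x : Matrix.SpecialLinearGroup (Fin 2) (ZMod (p^2)),
    x ∈ H ∧ (x : Matrix (Fin 2) (Fin 2) (ZMod (p^2))) = EE p M}

variable (hH : Subgroup.map
      (Matrix.SpecialLinearGroup.map (ZMod.castHom (dvd_pow_self p two_ne_zero) (ZMod p))) H
      = ⊤)

include hH in
lemma lift_lemma (g : Matrix.SpecialLinearGroup (Fin 2) (ZMod p)) :
    ∃ h ∈ H, π h = g := by
  have hg : g ∈ Subgroup.map π H := by rw [hH]; trivial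
  obtain ⟨h, hh, he⟩ := Subgroup.mem_map.mp hg
  exact ⟨h, hh, he⟩

lemma EE_zero [NeZero p] : EE p (0 : Matrix (Fin 2) (Fin 2) (ZMod p)) = 1 := by
  unfold EE
  have : (0 : Matrix (Fin 2) (Fin 2) (ZMod p)).map (ZMod.cast)
      = (0 : Matrix (Fin 2) (Fin 2) (ZMod (p^2))) := by
    ext i j; simp [Matrix.map_apply]
  rw [this, smul_zero, add_zero]

include hp in
lemma Sadd {M N : Matrix (Fin 2) (Fin 2) (ZMod p)} (hM : M ∈ SS p H) (hN : N ∈ SS p H) :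
    M + N ∈ SS p H := by
  haveI : NeZero p := ⟨hp.ne_zero⟩
  obtain ⟨x, hx, hex⟩ := hM
  obtain ⟨y, hy, hey⟩ := hN
  exact ⟨x * y, mul_mem hx hy, by rw [coe_mul, hex, hey, EE_mul hp]⟩

include hp in
lemma Sneg {M : Matrix (Fin 2) (Fin 2) (ZMod p)} (hM : M ∈ SS p H) : -M ∈ SS p H := by
  haveI : NeZero p := ⟨hp.ne_zero⟩
  obtain ⟨x, hx, hex⟩ := hM
  refine ⟨x⁻¹, inv_mem hx, ?_⟩
  have h1 : EE p M * EE p (-M) = 1 := by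
    rw [EE_mul hp, add_neg_cancel, EE_zero]
  have hinv : ((x⁻¹ * x : Matrix.SpecialLinearGroup (Fin 2) (ZMod (p^2)))
      : Matrix (Fin 2) (Fin 2) (ZMod (p^2))) = 1 := by
    rw [inv_mul_cancel, coe_one]
  rw [coe_mul] at hinv
  calc ((x⁻¹ : Matrix.SpecialLinearGroup (Fin 2) (ZMod (p^2)))
        : Matrix (Fin 2) (Fin 2) (ZMod (p^2)))
      = ((x⁻¹ : Matrix.SpecialLinearGroup (Fin 2) (ZMod (p^2)))
        : Matrix (Fin 2) (Fin 2) (ZMod (p^2))) * (EE p M * EE p (-M)) := by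
        rw [h1, mul_one]
    _ = (((x⁻¹ : Matrix.SpecialLinearGroup (Fin 2) (ZMod (p^2)))
        : Matrix (Fin 2) (Fin 2) (ZMod (p^2)))
          * (x : Matrix (Fin 2) (Fin 2) (ZMod (p^2)))) * EE p (-M) := by
        rw [hex, mul_assoc]
    _ = EE p (-M) := by rw [hinv, one_mul]

include hp hH in
lemma Sconj {M : Matrix (Fin 2) (Fin 2) (ZMod p)} (hM : M ∈ SS p H)
    (g : Matrix.SpecialLinearGroup (Fin 2) (ZMod p)) :
    ((g : Matrix (Fin 2) (Fin 2) (ZMod p)) * M * ((g⁻¹ : Matrix.SpecialLinearGroup (Fin 2) (ZMod p)) : Matrix (Fin 2) (Fin 2) (ZMod p))) ∈ SS p H := by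
  haveI : NeZero p := ⟨hp.ne_zero⟩
  obtain ⟨x, hx, hex⟩ := hM
  obtain ⟨h, hh, hhe⟩ := lift_lemma H hH g
  refine ⟨h * x * h⁻¹, mul_mem (mul_mem hh hx) (inv_mem hh), ?_⟩
  rw [coe_mul, coe_mul, hex]
  unfold EE
  have hinv : ((h * h⁻¹ : Matrix.SpecialLinearGroup (Fin 2) (ZMod (p^2)))
      : Matrix (Fin 2) (Fin 2) (ZMod (p^2))) = 1 := by
    rw [mul_inv_cancel, coe_one]
  rw [coe_mul] at hinv
  have expand : ∀ (a b c : Matrix (Fin 2) (Fin 2) (ZMod (p^2))),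
      a * (1 + b) * c = a * c + a * b * c := by intros; noncomm_ring
  rw [expand, hinv, mul_smul_comm, smul_mul_assoc]
  congr 1
  refine psmul_matrix_congr hp ?_
  rw [_root_.map_mul, _root_.map_mul, red_map_cast, ← coe_pi, ← coe_pi, hhe, map_inv, hhe,
    red_map_cast]

include hp h5 hH in
lemma Sbase : eF p ∈ SS p H := by
  haveI : NeZero p := ⟨hp.ne_zero⟩
  obtain ⟨h, hh, hhe⟩ := lift_lemma H hH ⟨uF p, by simp [uF, Matrix.det_fin_two_of]⟩
  refine ⟨h ^ p, pow_mem hh p, ?_⟩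
  rw [coe_pow]
  refine key_pow hp h5 _ ?_
  rw [← coe_pi, hhe]

end groups

section generation
open Matrix Matrix.SpecialLinearGroup

variable {p : ℕ} (hp : p.Prime) (h5 : 5 ≤ p)
  (H : Subgroup (Matrix.SpecialLinearGroup (Fin 2) (ZMod (p^2))))
  (hH : Subgroup.map
      (Matrix.SpecialLinearGroup.map (ZMod.castHom (dvd_pow_self p two_ne_zero) (ZMod p))) H
      = ⊤)

def Fb (p : ℕ) : Matrix (Fin 2) (Fin 2) (ZMod p) := !![0,0;1,0]
def Hb (p : ℕ) : Matrix (Fin 2) (Fin 2) (ZMod p) := !![1,0;0,-1]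

def WW (p : ℕ) : Matrix.SpecialLinearGroup (Fin 2) (ZMod p) :=
  ⟨!![0,-1;1,0], by simp [Matrix.det_fin_two_of]⟩
def LL {p : ℕ} (c : ZMod p) : Matrix.SpecialLinearGroup (Fin 2) (ZMod p) :=
  ⟨!![1,0;c,1], by simp [Matrix.det_fin_two_of]⟩
def UU {p : ℕ} (c : ZMod p) : Matrix.SpecialLinearGroup (Fin 2) (ZMod p) :=
  ⟨!![1,c;0,1], by simp [Matrix.det_fin_two_of]⟩

lemma comp1 : ((WW p : Matrix (Fin 2) (Fin 2) (ZMod p))) * eF p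
    * (((WW p)⁻¹ : Matrix.SpecialLinearGroup (Fin 2) (ZMod p)) : Matrix (Fin 2) (Fin 2) (ZMod p))
    = -(Fb p) := by
  rw [coe_inv]
  ext i j
  fin_cases i <;> fin_cases j <;>
    simp [WW, eF, Fb, adjugate_fin_two, Matrix.mul_apply, Fin.sum_univ_two]

lemma comp2 (c : ZMod p) : ((UU c : Matrix (Fin 2) (Fin 2) (ZMod p))) * Hb p
    * (((UU c)⁻¹ : Matrix.SpecialLinearGroup (Fin 2) (ZMod p)) : Matrix (Fin 2) (Fin 2) (ZMod p))
    = Hb p - (2*c) • eF p := by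
  rw [coe_inv]
  ext i j
  fin_cases i <;> fin_cases j <;>
    (simp [UU, eF, Hb, adjugate_fin_two, Matrix.mul_apply, Fin.sum_univ_two]; try ring)

lemma comp3 (c : ZMod p) : ((LL c : Matrix (Fin 2) (Fin 2) (ZMod p))) * Hb p
    * (((LL c)⁻¹ : Matrix.SpecialLinearGroup (Fin 2) (ZMod p)) : Matrix (Fin 2) (Fin 2) (ZMod p))
    = Hb p + (2*c) • Fb p := by
  rw [coe_inv]
  ext i j
  fin_cases i <;> fin_cases j <;>
    (simp [LL, Fb, Hb, adjugate_fin_two, Matrix.mul_apply, Fin.sum_univ_two]; try ring)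

lemma comp4 (c : ZMod p) : ((LL c : Matrix (Fin 2) (Fin 2) (ZMod p))) * eF p
    * (((LL c)⁻¹ : Matrix.SpecialLinearGroup (Fin 2) (ZMod p)) : Matrix (Fin 2) (Fin 2) (ZMod p))
    = eF p - c • Hb p - (c^2) • Fb p := by
  rw [coe_inv]
  ext i j
  fin_cases i <;> fin_cases j <;>
    (simp [LL, eF, Fb, Hb, adjugate_fin_two, Matrix.mul_apply, Fin.sum_univ_two]; try ring)

include hp h5 hH in
lemma mFb : Fb p ∈ SS p H := by
  have h1 := Sconj hp H hH (Sbase hp h5 H hH) (WW p)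
  rw [comp1] at h1
  have h2 := Sneg hp H h1
  rwa [neg_neg] at h2

include hp h5 hH in
lemma mHb : Hb p ∈ SS p H := by
  have h1 := Sconj hp H hH (Sbase hp h5 H hH) (LL 1)
  rw [comp4] at h1
  have h2 := Sadd hp H (Sadd hp H (Sbase hp h5 H hH) (Sneg hp H (mFb hp h5 H hH))) (Sneg hp H h1)
  have he : eF p + -(Fb p) + -(eF p - (1 : ZMod p) • Hb p - ((1 : ZMod p))^2 • Fb p) = Hb p := by
    rw [one_pow, one_smul, one_smul]; abel
  rwa [he] at h2

include hp h5 hH in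
lemma meF (c : ZMod p) : c • eF p ∈ SS p H := by
  haveI := Fact.mk hp
  have h1 := Sconj hp H hH (mHb hp h5 H hH) (UU (-(c * 2⁻¹)))
  rw [comp2] at h1
  have h2 := Sadd hp H h1 (Sneg hp H (mHb hp h5 H hH))
  have he : Hb p - ((2 : ZMod p) * -(c * 2⁻¹)) • eF p + -(Hb p) = c • eF p := by
    have h2c : (2 : ZMod p) * -(c * 2⁻¹) = -c := by
      rw [mul_neg, mul_comm c, ← mul_assoc, mul_inv_cancel₀ (two_ne_zero_F h5), one_mul]
    rw [h2c, neg_smul]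
    abel
  rwa [he] at h2

include hp h5 hH in
lemma mFb' (c : ZMod p) : c • Fb p ∈ SS p H := by
  haveI := Fact.mk hp
  have h1 := Sconj hp H hH (mHb hp h5 H hH) (LL (c * 2⁻¹))
  rw [comp3] at h1
  have h2 := Sadd hp H h1 (Sneg hp H (mHb hp h5 H hH))
  have he : Hb p + ((2 : ZMod p) * (c * 2⁻¹)) • Fb p + -(Hb p) = c • Fb p := by
    have h2c : (2 : ZMod p) * (c * 2⁻¹) = c := by
      rw [mul_comm c, ← mul_assoc, mul_inv_cancel₀ (two_ne_zero_F h5), one_mul]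
    rw [h2c]
    abel
  rwa [he] at h2

include hp h5 hH in
lemma mHb' (c : ZMod p) : c • Hb p ∈ SS p H := by
  have h1 := Sconj hp H hH (Sbase hp h5 H hH) (LL c)
  rw [comp4] at h1
  have h2 := Sadd hp H (Sadd hp H (Sbase hp h5 H hH) (Sneg hp H (mFb' hp h5 H hH (c^2))))
    (Sneg hp H h1)
  have he : eF p + -(c^2 • Fb p) + -(eF p - c • Hb p - c^2 • Fb p) = c • Hb p := by abel
  rwa [he] at h2

include hp h5 hH in
lemma gen (M : Matrix (Fin 2) (Fin 2) (ZMod p)) (htr : M 1 1 = - M 0 0) : M ∈ SS p H := by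
  have hdecomp : M = M 0 0 • Hb p + M 0 1 • eF p + M 1 0 • Fb p := by
    ext i j
    fin_cases i <;> fin_cases j <;>
      simp [Hb, eF, Fb, htr]
  rw [hdecomp]
  exact Sadd hp H (Sadd hp H (mHb' hp h5 H hH _) (meF hp h5 H hH _)) (mFb' hp h5 H hH _)

end generation

/-- For a prime `p ≥ 5`, a subgroup of `SL₂(ℤ/p²ℤ)` surjecting onto `SL₂(ℤ/pℤ)` under
reduction is all of `SL₂(ℤ/p²ℤ)`. -/
theorem stmt6 (p : ℕ) (hp : p.Prime) (h5 : 5 ≤ p)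
    (H : Subgroup (Matrix.SpecialLinearGroup (Fin 2) (ZMod (p ^ 2))))
    (hH : Subgroup.map
      (Matrix.SpecialLinearGroup.map (ZMod.castHom (dvd_pow_self p two_ne_zero) (ZMod p))) H
      = ⊤) :
    H = ⊤ := by
  haveI : NeZero p := ⟨hp.ne_zero⟩
  rw [Subgroup.eq_top_iff']
  intro g
  obtain ⟨h, hh, hhe⟩ := lift_lemma H hH
    (Matrix.SpecialLinearGroup.map (ZMod.castHom (dvd_pow_self p two_ne_zero) (ZMod p)) g)
  suffices hk : g * h⁻¹ ∈ H by
    have := mul_mem hk hh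
    rwa [inv_mul_cancel_right] at this
  set k := g * h⁻¹ with hkdef
  have hπk : Matrix.SpecialLinearGroup.map (ZMod.castHom (dvd_pow_self p two_ne_zero) (ZMod p)) k
      = 1 := by
    rw [hkdef, map_mul, map_inv, hhe, mul_inv_cancel]
  have hred : redM p (k : Matrix (Fin 2) (Fin 2) (ZMod (p^2))) = 1 := by
    rw [← coe_pi, hπk, Matrix.SpecialLinearGroup.coe_one]
  obtain ⟨M, hM⟩ := exists_EE hp hred
  -- trace zero
  have hdet : ((k : Matrix (Fin 2) (Fin 2) (ZMod (p^2)))).det = 1 := k.2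
  have pmul_pmul : ∀ x y : ZMod (p^2), ((p : ZMod (p^2))*x) * ((p : ZMod (p^2))*y) = 0 := by
    intro x y
    have h0 := pp_zero (p := p)
    linear_combination (x*y) * h0
  have e00 : (EE p M) 0 0 = 1 + (p : ZMod (p^2)) * ZMod.cast (M 0 0) := by
    simp [EE, Matrix.one_apply]
  have e01 : (EE p M) 0 1 = (p : ZMod (p^2)) * ZMod.cast (M 0 1) := by
    simp [EE, Matrix.one_apply]
  have e10 : (EE p M) 1 0 = (p : ZMod (p^2)) * ZMod.cast (M 1 0) := by
    simp [EE, Matrix.one_apply]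
  have e11 : (EE p M) 1 1 = 1 + (p : ZMod (p^2)) * ZMod.cast (M 1 1) := by
    simp [EE, Matrix.one_apply]
  rw [hM, Matrix.det_fin_two, e00, e01, e10, e11] at hdet
  have hsum : (p : ZMod (p^2)) * ZMod.cast (M 0 0) + (p : ZMod (p^2)) * ZMod.cast (M 1 1)
      = 0 := by
    have hq1 := pmul_pmul (ZMod.cast (M 0 0)) (ZMod.cast (M 1 1))
    have hq2 := pmul_pmul (ZMod.cast (M 0 1)) (ZMod.cast (M 1 0))
    linear_combination hdet - hq1 + hq2
  have htr : M 1 1 = - M 0 0 := by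
    have h1 : (p : ZMod (p^2)) * ZMod.cast (M 0 0 + M 1 1) = 0 := by
      have := pmul_congr hp (s := ZMod.cast (M 0 0 + M 1 1))
        (s' := ZMod.cast (M 0 0) + ZMod.cast (M 1 1))
        (by rw [red_cast_roundtrip, map_add, red_cast_roundtrip, red_cast_roundtrip])
      rw [this, mul_add, hsum]
    rw [pmul_eq_zero_iff hp, red_cast_roundtrip] at h1
    linear_combination h1
  obtain ⟨x, hxH, hxe⟩ := gen hp h5 H hH M htr
  have hxk : x = k := Subtype.ext (by rw [hxe, ← hM])
  rwa [← hxk]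
end

section
/- Let k ≥ 3 be an integer and let H be a subgroup of SL₂(ℤ/2^{k+1}ℤ) whose image under the reduction homomorphism SL₂(ℤ/2^{k+1}ℤ) → SL₂(ℤ/2^kℤ) is all of SL₂(ℤ/2^kℤ). Then H = SL₂(ℤ/2^{k+1}ℤ). -/
lemma aux_decomp9 {k : ℕ} (x u : ZMod (2 ^ (k + 1)))
    (h : ZMod.castHom (pow_dvd_pow 2 (Nat.le_succ k)) (ZMod (2 ^ k)) x
       = ZMod.castHom (pow_dvd_pow 2 (Nat.le_succ k)) (ZMod (2 ^ k)) u) :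
    ∃ e, x = u + 2 ^ k * e := by
  set g := ZMod.castHom (pow_dvd_pow 2 (Nat.le_succ k)) (ZMod (2 ^ k))
  have hd : g (x - u) = 0 := by rw [map_sub, h, sub_self]
  have h1 : (((x - u).val : ℕ) : ZMod (2 ^ (k+1))) = x - u := ZMod.natCast_zmod_val _
  have h2 : (((x - u).val : ℕ) : ZMod (2 ^ k)) = 0 := by
    rw [← map_natCast g, h1, hd]
  rw [ZMod.natCast_eq_zero_iff] at h2
  obtain ⟨c, hc⟩ := h2
  refine ⟨(c : ZMod (2 ^ (k+1))), ?_⟩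
  have : ((2 ^ k * c : ℕ) : ZMod (2 ^ (k+1))) = x - u := by rw [← hc, h1]
  push_cast at this
  linear_combination -this

lemma aux_half9 {k : ℕ} (x : ZMod (2 ^ (k + 1))) (h : 2 ^ k * x = 0) :
    ∃ t, x = 2 * t := by
  have h1 : ((x.val : ℕ) : ZMod (2 ^ (k+1))) = x := ZMod.natCast_zmod_val _
  have h2 : ((2 ^ k * x.val : ℕ) : ZMod (2 ^ (k+1))) = 0 := by
    push_cast
    rw [h1, h]
  rw [ZMod.natCast_eq_zero_iff] at h2
  obtain ⟨c, hc⟩ := h2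
  have hpos : 0 < 2 ^ k := Nat.pow_pos (n := k) (by norm_num)
  have hval : x.val = 2 * c := by
    have : 2 ^ k * x.val = 2 ^ k * (2 * c) := by rw [hc]; ring
    exact Nat.eq_of_mul_eq_mul_left hpos this
  refine ⟨(c : ZMod (2 ^ (k+1))), ?_⟩
  rw [← h1, hval]
  push_cast
  ring

set_option maxHeartbeats 1600000 in
/-- For `k ≥ 3`, a subgroup of `SL₂(ℤ/2^{k+1}ℤ)` surjecting onto `SL₂(ℤ/2^kℤ)` under
reduction is all of `SL₂(ℤ/2^{k+1}ℤ)`. -/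
theorem stmt9 (k : ℕ) (hk : 3 ≤ k)
    (H : Subgroup (Matrix.SpecialLinearGroup (Fin 2) (ZMod (2 ^ (k + 1)))))
    (hH : Subgroup.map
      (Matrix.SpecialLinearGroup.map
        (ZMod.castHom (pow_dvd_pow 2 (Nat.le_succ k)) (ZMod (2 ^ k)))) H = ⊤) :
    H = ⊤ := by
  obtain ⟨j, rfl⟩ : ∃ j, k = j + 3 := ⟨k - 3, by omega⟩
  clear hk
  set g := ZMod.castHom (pow_dvd_pow 2 (Nat.le_succ (j + 3))) (ZMod (2 ^ (j + 3))) with hgdef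
  set f := Matrix.SpecialLinearGroup.map (n := Fin 2) g with hfdef
  -- basic power facts
  set c : ZMod (2 ^ (j + 3 + 1)) := 2 ^ (j + 2) with hcdef
  have hpk1 : (2 : ZMod (2 ^ (j + 3 + 1))) ^ (j + 3 + 1) = 0 := by
    have := ZMod.natCast_self (2 ^ (j + 3 + 1))
    push_cast at this
    exact this
  have hck : (2 : ZMod (2 ^ (j + 3 + 1))) ^ (j + 3) = 2 * c := by rw [hcdef]; ring
  have hc2 : c * c = 0 := by
    rw [hcdef] at *
    linear_combination (2 : ZMod (2 ^ (j + 3 + 1))) ^ j * hpk1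
  have hc4 : 4 * c = 0 := by
    rw [hcdef] at *
    linear_combination hpk1
  have hpk' : (2 : ZMod (2 ^ (j + 3))) ^ (j + 3) = 0 := by
    have := ZMod.natCast_self (2 ^ (j + 3))
    push_cast at this
    exact this
  have key : ∀ z : Matrix.SpecialLinearGroup (Fin 2) (ZMod (2 ^ (j + 3 + 1))),
      f z = 1 → z ∈ H := by
    intro z hz
    have hzc : RingHom.mapMatrix g (z : Matrix (Fin 2) (Fin 2) (ZMod (2 ^ (j + 3 + 1))))
        = (1 : Matrix (Fin 2) (Fin 2) (ZMod (2 ^ (j + 3)))) := by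
      have := congrArg (Subtype.val) hz
      simpa [hfdef] using this
    have h00 : g (z.1 0 0) = g 1 := by
      have := congrFun (congrFun hzc 0) 0
      simpa [Matrix.one_apply] using this
    have h01 : g (z.1 0 1) = g 0 := by
      have := congrFun (congrFun hzc 0) 1
      simpa [Matrix.one_apply] using this
    have h10 : g (z.1 1 0) = g 0 := by
      have := congrFun (congrFun hzc 1) 0
      simpa [Matrix.one_apply] using this
    have h11 : g (z.1 1 1) = g 1 := by
      have := congrFun (congrFun hzc 1) 1
      simpa [Matrix.one_apply] using this
    obtain ⟨a00, ha00⟩ := aux_decomp9 _ _ h00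
    obtain ⟨a01, ha01⟩ := aux_decomp9 _ _ h01
    obtain ⟨a10, ha10⟩ := aux_decomp9 _ _ h10
    obtain ⟨a11, ha11⟩ := aux_decomp9 _ _ h11
    -- trace condition from the determinant
    have hdet : z.1 0 0 * z.1 1 1 - z.1 0 1 * z.1 1 0 = 1 := by
      have := z.2
      rwa [Matrix.det_fin_two] at this
    rw [ha00, ha01, ha10, ha11] at hdet
    have h2ksum : (2 : ZMod (2 ^ (j + 3 + 1))) ^ (j + 3) * (a00 + a11) = 0 := by
      linear_combination hdet + (a00 + a11) * hck + (4 * a01 * a10 - 4 * a00 * a11) * hc2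
    obtain ⟨t, ht⟩ := aux_half9 _ h2ksum
    -- the square-root matrix mod 2^k
    have hX : (1 + c * a00) * (1 + c * a11) - c * a01 * (c * a10)
        = 1 + 2 ^ (j + 3) * t := by
      linear_combination c * ht - t * hck + (a00 * a11 - a01 * a10) * hc2
    set M : Matrix (Fin 2) (Fin 2) (ZMod (2 ^ (j + 3))) :=
      !![g (1 + c * a00), g (c * a01); g (c * a10), g (1 + c * a11)] with hMdef
    have hMdet : M.det = 1 := by
      rw [hMdef, Matrix.det_fin_two_of, ← map_mul, ← map_mul, ← map_sub, hX,
        map_add, map_one, map_mul, map_pow, map_ofNat, hpk', zero_mul, add_zero]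
    have hmem : (⟨M, hMdet⟩ : Matrix.SpecialLinearGroup (Fin 2) (ZMod (2 ^ (j + 3))))
        ∈ Subgroup.map f H := by rw [hH]; trivial
    obtain ⟨w, hwH, hfw⟩ := hmem
    have hwc : RingHom.mapMatrix g (w : Matrix (Fin 2) (Fin 2) (ZMod (2 ^ (j + 3 + 1)))) = M := by
      have := congrArg (Subtype.val) hfw
      simpa [hfdef] using this
    have hw00 : g (w.1 0 0) = g (1 + c * a00) := by
      have := congrFun (congrFun hwc 0) 0
      simpa [hMdef] using this
    have hw01 : g (w.1 0 1) = g (c * a01) := by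
      have := congrFun (congrFun hwc 0) 1
      simpa [hMdef] using this
    have hw10 : g (w.1 1 0) = g (c * a10) := by
      have := congrFun (congrFun hwc 1) 0
      simpa [hMdef] using this
    have hw11 : g (w.1 1 1) = g (1 + c * a11) := by
      have := congrFun (congrFun hwc 1) 1
      simpa [hMdef] using this
    obtain ⟨e00, he00⟩ := aux_decomp9 _ _ hw00
    obtain ⟨e01, he01⟩ := aux_decomp9 _ _ hw01
    obtain ⟨e10, he10⟩ := aux_decomp9 _ _ hw10
    obtain ⟨e11, he11⟩ := aux_decomp9 _ _ hw11
    have hwwz : w * w = z := by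
      apply Subtype.ext
      rw [Matrix.SpecialLinearGroup.coe_mul]
      ext i j'
      fin_cases i <;> fin_cases j' <;>
        simp only [Matrix.mul_apply, Fin.sum_univ_two]
      · show w.1 0 0 * w.1 0 0 + w.1 0 1 * w.1 1 0 = z.1 0 0
        rw [he00, he01, he10, ha00]
        linear_combination (2 * e00) * hck +
          ((a00 + 2 * e00) ^ 2 + (a01 + 2 * e01) * (a10 + 2 * e10)) * hc2 + e00 * hc4
      · show w.1 0 0 * w.1 0 1 + w.1 0 1 * w.1 1 1 = z.1 0 1
        rw [he00, he01, he11, ha01]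
        linear_combination (2 * e01) * hck +
          ((a01 + 2 * e01) * (a00 + a11 + 2 * e00 + 2 * e11)) * hc2 + e01 * hc4
      · show w.1 1 0 * w.1 0 0 + w.1 1 1 * w.1 1 0 = z.1 1 0
        rw [he00, he10, he11, ha10]
        linear_combination (2 * e10) * hck +
          ((a10 + 2 * e10) * (a00 + a11 + 2 * e00 + 2 * e11)) * hc2 + e10 * hc4
      · show w.1 1 0 * w.1 0 1 + w.1 1 1 * w.1 1 1 = z.1 1 1
        rw [he01, he10, he11, ha11]
        linear_combination (2 * e11) * hck +
          ((a11 + 2 * e11) ^ 2 + (a10 + 2 * e10) * (a01 + 2 * e01)) * hc2 + e11 * hc4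
    exact hwwz ▸ H.mul_mem hwH hwH
  rw [eq_top_iff]
  intro x _
  have hx : f x ∈ Subgroup.map f H := by rw [hH]; trivial
  obtain ⟨h, hhH, hfh⟩ := hx
  have h1 : f (h⁻¹ * x) = 1 := by rw [_root_.map_mul, _root_.map_inv, hfh, inv_mul_cancel]
  have h2 := key _ h1
  have h3 := H.mul_mem hhH h2
  simpa using h3
end

section
/- Let k ≥ 2 be an integer and let H be a subgroup of SL₂(ℤ/3^{k+1}ℤ) whose image under the reduction homomorphism SL₂(ℤ/3^{k+1}ℤ) → SL₂(ℤ/3^kℤ) is all of SL₂(ℤ/3^kℤ). Then H = SL₂(ℤ/3^{k+1}ℤ). -/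
private theorem cube_lemma' {R : Type*} [Ring R] (α B C : R) (hc : ∀ x, α * x = x * α)
    (h3 : α ^ 3 = 0) (h32 : 3 * α ^ 2 = 0) (h9 : 9 * α = 0) :
    (1 + α * B + 3 * (α * C)) ^ 3 = 1 + 3 * (α * B) := by
  have e1 : (1 + α * B + 3 * (α * C)) = 1 + α * (B + 3 * C) := by
    noncomm_ring
  set D := B + 3 * C with hD
  have h1 : α * D * (α * D) = α ^ 2 * (D * D) := by
    rw [mul_assoc α D (α*D), ← mul_assoc D α D, ← hc D, mul_assoc α D D,
      ← mul_assoc α α (D*D), ← pow_two]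
  have h2 : α * D * (α * D) * (α * D) = α ^ 3 * (D * D * D) := by
    rw [h1, mul_assoc (α^2) (D*D) (α*D), ← mul_assoc (D*D) α D, ← hc (D*D),
      mul_assoc α (D*D) D, ← mul_assoc (α^2) α, ← pow_succ]
  have e2 : (1 + α * D) ^ 3 = 1 + 3 * (α * D) + 3 * (α*D*(α*D)) + α*D*(α*D)*(α*D) := by
    noncomm_ring
  rw [e1, e2, h2, h1, h3, zero_mul, add_zero, ← mul_assoc 3 (α^2) (D*D), h32, zero_mul, add_zero]
  have hAD : 3 * (α * D) = 3 * (α * B) + 9 * α * C := by rw [hD]; noncomm_ring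
  rw [hAD, h9, zero_mul, add_zero]

private theorem cube_smul' {R A : Type*} [CommRing R] [Ring A] [Algebra R A] (a : R) (B C : A)
    (h3 : a ^ 3 = 0) (h32 : 3 * a ^ 2 = 0) (h9 : 9 * a = 0) :
    (1 + a • B + (3 * a) • C) ^ 3 = 1 + (3 * a) • B := by
  set α := algebraMap R A a with hα
  have hc : ∀ x : A, α * x = x * α := fun x => Algebra.commutes a x
  have e3 : α ^ 3 = 0 := by rw [hα, ← map_pow, h3, map_zero]
  have e32 : 3 * α ^ 2 = 0 := by
    rw [hα, ← map_pow, ← map_ofNat (algebraMap R A) 3, ← map_mul, h32, map_zero]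
  have e9 : 9 * α = 0 := by
    rw [hα, ← map_ofNat (algebraMap R A) 9, ← map_mul, h9, map_zero]
  have key := cube_lemma' α B C hc e3 e32 e9
  have hs1 : a • B = α * B := Algebra.smul_def a B
  have hs2 : (3*a) • C = 3 * (α * C) := by
    rw [Algebra.smul_def, map_mul, map_ofNat, mul_assoc]
  have hs3 : (3*a) • B = 3 * (α * B) := by
    rw [Algebra.smul_def, map_mul, map_ofNat, mul_assoc]
  rw [hs1, hs2, hs3, key]

private theorem kerdiv' (k : ℕ) (x : ZMod (3 ^ (k+1)))
    (hx : ZMod.castHom (pow_dvd_pow 3 (Nat.le_succ k)) (ZMod (3 ^ k)) x = 0) :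
    ∃ y : ZMod (3 ^ (k+1)), x = (3:ZMod (3^(k+1)))^k * y := by
  have hN : (3:ℕ)^(k+1) ≠ 0 := by positivity
  have hM : (3:ℕ)^k ≠ 0 := by positivity
  haveI : NeZero ((3:ℕ)^(k+1)) := ⟨hN⟩
  haveI : NeZero ((3:ℕ)^k) := ⟨hM⟩
  rw [ZMod.castHom_apply] at hx
  rw [ZMod.cast_eq_val] at hx
  have hval := hx
  rw [ZMod.natCast_eq_zero_iff] at hval
  obtain ⟨c, hc⟩ := hval
  refine ⟨(c : ZMod (3^(k+1))), ?_⟩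
  have : ((x.val : ℕ) : ZMod (3^(k+1))) = x := by simp [ZMod.natCast_val, ZMod.cast_id]
  rw [← this, hc]
  push_cast
  ring

private theorem muldiv' (k : ℕ) (t : ZMod (3 ^ (k+1)))
    (h : (3:ZMod (3^(k+1)))^k * t = 0) : ∃ s : ZMod (3^(k+1)), t = 3 * s := by
  have hN : (3:ℕ)^(k+1) ≠ 0 := by positivity
  haveI : NeZero ((3:ℕ)^(k+1)) := ⟨hN⟩
  have ht : ((3^k * t.val : ℕ) : ZMod (3^(k+1))) = 0 := by
    push_cast
    rw [ZMod.natCast_val, ZMod.cast_id]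
    exact h
  rw [ZMod.natCast_eq_zero_iff] at ht
  have h3 : 3 ∣ t.val := by
    obtain ⟨c, hc⟩ := ht
    have hc' : 3^k * t.val = 3^k * (3*c) := by rw [hc]; ring
    have h2 : t.val = 3*c := Nat.eq_of_mul_eq_mul_left (by positivity) hc'
    exact ⟨c, h2⟩
  obtain ⟨s, hs⟩ := h3
  refine ⟨(s : ZMod (3^(k+1))), ?_⟩
  have : ((t.val : ℕ) : ZMod (3^(k+1))) = t := by simp [ZMod.natCast_val, ZMod.cast_id]
  rw [← this, hs]
  push_cast
  ring

/-- For `k ≥ 2`, a subgroup of `SL₂(ℤ/3^{k+1}ℤ)` surjecting onto `SL₂(ℤ/3^kℤ)` under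
reduction is all of `SL₂(ℤ/3^{k+1}ℤ)`. -/
theorem stmt10 (k : ℕ) (hk : 2 ≤ k)
    (H : Subgroup (Matrix.SpecialLinearGroup (Fin 2) (ZMod (3 ^ (k + 1)))))
    (hH : Subgroup.map
      (Matrix.SpecialLinearGroup.map
        (ZMod.castHom (pow_dvd_pow 3 (Nat.le_succ k)) (ZMod (3 ^ k)))) H = ⊤) :
    H = ⊤ := by
  set f := ZMod.castHom (pow_dvd_pow 3 (Nat.le_succ k)) (ZMod (3 ^ k)) with hf
  set φ := Matrix.SpecialLinearGroup.map (n := Fin 2) f with hφ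
  -- basic nilpotency facts
  have hN0 : (3:ZMod (3^(k+1)))^(k+1) = 0 := by
    have := ZMod.natCast_self (3^(k+1))
    push_cast at this
    exact this
  have hM0 : (3:ZMod (3^k))^k = 0 := by
    have := ZMod.natCast_self (3^k)
    push_cast at this
    exact this
  have hpow0 : ∀ m : ℕ, k + 1 ≤ m → (3:ZMod (3^(k+1)))^m = 0 := by
    intro m hm
    have : (3:ZMod (3^(k+1)))^m = 3^(k+1) * 3^(m-(k+1)) := by
      rw [← pow_add]; congr 1; omega
    rw [this, hN0, zero_mul]
  have hpowM0 : ∀ m : ℕ, k ≤ m → (3:ZMod (3^k))^m = 0 := by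
    intro m hm
    have : (3:ZMod (3^k))^m = 3^k * 3^(m-k) := by
      rw [← pow_add]; congr 1; omega
    rw [this, hM0, zero_mul]
  set a : ZMod (3^(k+1)) := (3:ZMod (3^(k+1)))^(k-1) with ha
  have h3a : 3 * a = (3:ZMod (3^(k+1)))^k := by
    rw [ha, ← pow_succ']
    congr 1
    omega
  have ha3 : a ^ 3 = 0 := by
    rw [ha, ← pow_mul]
    apply hpow0
    omega
  have ha32 : 3 * a ^ 2 = 0 := by
    rw [ha, ← pow_mul, ← pow_succ']
    apply hpow0
    omega
  have ha9 : 9 * a = 0 := by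
    have : (9:ZMod (3^(k+1))) = 3^2 := by norm_num
    rw [this, ha, ← pow_add]
    apply hpow0
    omega
  -- suffices to show kernel is contained in H
  suffices hker : φ.ker ≤ H by
    have h1 := Subgroup.comap_map_eq (f := φ) H
    rw [hH, Subgroup.comap_top] at h1
    rw [h1]
    exact (sup_eq_left.mpr hker).symm
  intro g hg
  rw [MonoidHom.mem_ker] at hg
  -- entrywise: f (g i j - 1 i j) = 0
  have hgm : ((g : Matrix (Fin 2) (Fin 2) (ZMod (3^(k+1)))).map f) = 1 := by
    have := congrArg (fun x : Matrix.SpecialLinearGroup (Fin 2) (ZMod (3^k)) =>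
      (x : Matrix (Fin 2) (Fin 2) (ZMod (3^k)))) hg
    simpa [hφ, Matrix.SpecialLinearGroup.map_apply_coe] using this
  have hE : ∀ i j, f ((g : Matrix (Fin 2) (Fin 2) (ZMod (3^(k+1)))) i j
      - (1 : Matrix (Fin 2) (Fin 2) (ZMod (3^(k+1)))) i j) = 0 := by
    intro i j
    rw [map_sub]
    have h1 : f ((g : Matrix (Fin 2) (Fin 2) (ZMod (3^(k+1)))) i j) = (1 : Matrix (Fin 2) (Fin 2) (ZMod (3^k))) i j := by
      rw [← hgm]; rfl
    have h2 : f ((1 : Matrix (Fin 2) (Fin 2) (ZMod (3^(k+1)))) i j) = (1 : Matrix (Fin 2) (Fin 2) (ZMod (3^k))) i j := by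
      by_cases hij : i = j
      · subst hij; simp [Matrix.one_apply_eq]
      · simp [Matrix.one_apply_ne hij]
    rw [h1, h2, sub_self]
  choose A hA using fun i j => kerdiv' k _ (hE i j)
  set A' : Matrix (Fin 2) (Fin 2) (ZMod (3^(k+1))) := Matrix.of A with hA'
  have hg1 : (g : Matrix (Fin 2) (Fin 2) (ZMod (3^(k+1)))) = 1 + ((3:ZMod (3^(k+1)))^k) • A' := by
    ext i j
    have := hA i j
    simp only [Matrix.add_apply, Matrix.smul_apply, smul_eq_mul, hA', Matrix.of_apply]
    rw [← this]
    ring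
  -- trace divisibility
  have hdet : Matrix.det (g : Matrix (Fin 2) (Fin 2) (ZMod (3^(k+1)))) = 1 := g.prop
  have htr : (3:ZMod (3^(k+1)))^k * (A 0 0 + A 1 1) = 0 := by
    rw [hg1] at hdet
    rw [Matrix.det_fin_two] at hdet
    simp only [Matrix.add_apply, Matrix.smul_apply, smul_eq_mul, hA', Matrix.of_apply] at hdet
    norm_num [Matrix.one_apply] at hdet
    have h2k : (3:ZMod (3^(k+1)))^k * (3:ZMod (3^(k+1)))^k = 0 := by
      rw [← pow_add]; apply hpow0; omega
    linear_combination hdet - (A 0 0 * A 1 1 - A 0 1 * A 1 0) * h2k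
  obtain ⟨s, hs⟩ := muldiv' k _ htr
  -- the lifted approximate element in SL2 (ZMod 3^k)
  have hdetw : Matrix.det (1 + ((3:ZMod (3^k))^(k-1)) • (A'.map f)) = 1 := by
    rw [Matrix.det_fin_two]
    simp only [Matrix.add_apply, Matrix.smul_apply, smul_eq_mul, Matrix.map_apply]
    have h2k : (3:ZMod (3^k))^(k-1) * (3:ZMod (3^k))^(k-1) = 0 := by
      rw [← pow_add]; apply hpowM0; omega
    have htrM : (3:ZMod (3^k))^(k-1) * (f (A 0 0) + f (A 1 1)) = 0 := by
      have : A 0 0 + A 1 1 = 3 * s := hs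
      have hfs : f (A 0 0) + f (A 1 1) = 3 * f s := by
        rw [← map_add, this, map_mul, map_ofNat]
      rw [hfs]
      rw [show (3:ZMod (3^k))^(k-1) * (3 * f s) = ((3:ZMod (3^k))^(k-1) * 3) * f s by ring]
      rw [← pow_succ]
      rw [show k - 1 + 1 = k by omega, hM0, zero_mul]
    simp only [hA', Matrix.of_apply]
    norm_num [Matrix.one_apply]
    linear_combination htrM + (f (A 0 0) * f (A 1 1) - f (A 0 1) * f (A 1 0)) * h2k
  set w : Matrix.SpecialLinearGroup (Fin 2) (ZMod (3^k)) := ⟨_, hdetw⟩ with hw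
  have hwmem : w ∈ Subgroup.map φ H := by rw [hH]; trivial
  obtain ⟨h, hhH, hfh⟩ := hwmem
  -- h ≡ 1 + 3^(k-1) A' mod 3^k
  have hhm : ((h : Matrix (Fin 2) (Fin 2) (ZMod (3^(k+1)))).map f)
      = 1 + ((3:ZMod (3^k))^(k-1)) • (A'.map f) := by
    have := congrArg (fun x : Matrix.SpecialLinearGroup (Fin 2) (ZMod (3^k)) =>
      (x : Matrix (Fin 2) (Fin 2) (ZMod (3^k)))) hfh
    simpa [hφ, Matrix.SpecialLinearGroup.map_apply_coe, hw] using this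
  have hf3 : f ((3:ZMod (3^(k+1)))^(k-1)) = (3:ZMod (3^k))^(k-1) := by
    rw [map_pow, map_ofNat]
  have hD : ∀ i j, f ((h : Matrix (Fin 2) (Fin 2) (ZMod (3^(k+1)))) i j
      - ((1 : Matrix (Fin 2) (Fin 2) (ZMod (3^(k+1)))) + a • A') i j) = 0 := by
    intro i j
    rw [map_sub]
    have h1 : f ((h : Matrix (Fin 2) (Fin 2) (ZMod (3^(k+1)))) i j)
        = ((1 : Matrix (Fin 2) (Fin 2) (ZMod (3^k))) + ((3:ZMod (3^k))^(k-1)) • (A'.map f)) i j := by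
      rw [← hhm]; rfl
    have h2 : f (((1 : Matrix (Fin 2) (Fin 2) (ZMod (3^(k+1)))) + a • A') i j)
        = ((1 : Matrix (Fin 2) (Fin 2) (ZMod (3^k))) + ((3:ZMod (3^k))^(k-1)) • (A'.map f)) i j := by
      simp only [Matrix.add_apply, Matrix.smul_apply, smul_eq_mul, map_add, map_mul,
        Matrix.map_apply]
      rw [ha, hf3]
      congr 1
      by_cases hij : i = j
      · subst hij; simp [Matrix.one_apply_eq]
      · simp [Matrix.one_apply_ne hij]
    rw [h1, h2, sub_self]
  choose C hC using fun i j => kerdiv' k _ (hD i j)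
  set C' : Matrix (Fin 2) (Fin 2) (ZMod (3^(k+1))) := Matrix.of C with hC'
  have hh1 : (h : Matrix (Fin 2) (Fin 2) (ZMod (3^(k+1)))) = 1 + a • A' + (3*a) • C' := by
    ext i j
    have := hC i j
    simp only [Matrix.add_apply, Matrix.smul_apply, smul_eq_mul, hC', Matrix.of_apply, h3a]
    rw [sub_eq_iff_eq_add] at this
    rw [this]
    simp only [Matrix.add_apply, Matrix.smul_apply, smul_eq_mul]
    ring
  -- conclude: h^3 = g
  have hcube : (h : Matrix (Fin 2) (Fin 2) (ZMod (3^(k+1)))) ^ 3 = (g : Matrix (Fin 2) (Fin 2) (ZMod (3^(k+1)))) := by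
    rw [hh1, cube_smul' a A' C' ha3 ha32 ha9, hg1, h3a]
  have : h ^ 3 = g := by
    ext1
    rw [Matrix.SpecialLinearGroup.coe_pow, hcube]
  rw [← this]
  exact pow_mem hhH 3
end

section
/- The normalizer in GL₂(𝔽₃) of the subgroup of diagonal matrices is conjugate in GL₂(𝔽₃) to a subgroup of the normalizer of the non-split Cartan subgroup C = { [[a,b],[-b,a]] : a,b ∈ 𝔽₃, (a,b) ≠ (0,0) }. -/
/-- The split Cartan subgroup of `GL₂(𝔽₃)`: invertible diagonal matrices. -/
def D3 : Subgroup (Matrix.GeneralLinearGroup (Fin 2) (ZMod 3)) where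
  carrier := {g | (g : Matrix (Fin 2) (Fin 2) (ZMod 3)) 0 1 = 0 ∧
    (g : Matrix (Fin 2) (Fin 2) (ZMod 3)) 1 0 = 0}
  one_mem' := by constructor <;> simp [Matrix.one_apply]
  mul_mem' := by
    rintro a b ⟨ha1, ha2⟩ ⟨hb1, hb2⟩
    constructor <;>
      simp [Units.val_mul, Matrix.mul_apply, Fin.sum_univ_two, ha1, ha2, hb1, hb2]
  inv_mem' := by
    rintro a ⟨h1, h2⟩
    constructor <;>
      · simp only [Matrix.coe_units_inv, Matrix.inv_def, Matrix.adjugate_fin_two,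
          Matrix.smul_apply, smul_eq_mul]
        simp [h1, h2]
        try ring
  
/-- The non-split Cartan subgroup `C = {[[a,b],[-b,a]] ≠ 0}` of `GL₂(𝔽₃)`. -/
def C3 : Subgroup (Matrix.GeneralLinearGroup (Fin 2) (ZMod 3)) where
  carrier := {g | (g : Matrix (Fin 2) (Fin 2) (ZMod 3)) 0 0 =
      (g : Matrix (Fin 2) (Fin 2) (ZMod 3)) 1 1 ∧
    (g : Matrix (Fin 2) (Fin 2) (ZMod 3)) 0 1 =
      -(g : Matrix (Fin 2) (Fin 2) (ZMod 3)) 1 0}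
  one_mem' := by constructor <;> simp [Matrix.one_apply]
  mul_mem' := by
    rintro a b ⟨ha1, ha2⟩ ⟨hb1, hb2⟩
    constructor <;>
      · simp only [Units.val_mul, Matrix.mul_apply, Fin.sum_univ_two]
        rw [ha1, ha2, hb1, hb2]
        try ring
  inv_mem' := by
    rintro a ⟨h1, h2⟩
    constructor <;>
      · simp only [Matrix.coe_units_inv, Matrix.inv_def, Matrix.adjugate_fin_two,
          Matrix.smul_apply, smul_eq_mul]
        simp [h1, h2]
        try ring


section helpers

private abbrev G3' := Matrix.GeneralLinearGroup (Fin 2) (ZMod 3)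
private abbrev M3' := Matrix (Fin 2) (Fin 2) (ZMod 3)

private lemma zmod3_neg_self : ∀ b : ZMod 3, b = -b → b = 0 := by decide
private lemma zmod3_sq : ∀ a : ZMod 3, a ≠ 0 → a * a = 1 := by decide

private lemma det_ne (x : G3') : ((x : M3')).det ≠ 0 := by
  have h : (x : M3').det * ((x⁻¹ : G3') : M3').det = 1 := by
    rw [← Matrix.det_mul, ← Units.val_mul, mul_inv_cancel]; simp
  intro h0
  rw [h0, zero_mul] at h
  exact zero_ne_one h

private lemma det_expand (x : G3') :
    (x : M3') 0 0 * (x : M3') 1 1 - (x : M3') 0 1 * (x : M3') 1 0 ≠ 0 := by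
  have := det_ne x
  rwa [Matrix.det_fin_two] at this

private lemma conj_eq (x n : G3') :
    (((x * n * x⁻¹ : G3') : M3')) * (x : M3') = (x : M3') * (n : M3') := by
  have hm : (x * n * x⁻¹) * x = x * n := by group
  rw [← Units.val_mul, ← Units.val_mul, hm]

private lemma conj_entry (x n : G3') (i j : Fin 2) :
    (((x * n * x⁻¹ : G3') : M3')) i 0 * (x : M3') 0 j
      + (((x * n * x⁻¹ : G3') : M3')) i 1 * (x : M3') 1 j
      = (x : M3') i 0 * (n : M3') 0 j + (x : M3') i 1 * (n : M3') 1 j := by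
  have := congrFun (congrFun (conj_eq x n) i) j
  simpa [Matrix.mul_apply, Fin.sum_univ_two] using this

/-- shape: diagonal or antidiagonal -/
private def Shape (x : G3') : Prop :=
  ((x : M3') 0 1 = 0 ∧ (x : M3') 1 0 = 0) ∨ ((x : M3') 0 0 = 0 ∧ (x : M3') 1 1 = 0)

private lemma shape_inv (x : G3') (hx : Shape x) : Shape x⁻¹ := by
  rcases hx with ⟨h1, h2⟩ | ⟨h1, h2⟩
  · left
    constructor <;>
      · simp only [Matrix.coe_units_inv, Matrix.inv_def, Matrix.adjugate_fin_two,
          Matrix.smul_apply, smul_eq_mul]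
        simp [h1, h2]
  · right
    constructor <;>
      · simp only [Matrix.coe_units_inv, Matrix.inv_def, Matrix.adjugate_fin_two,
          Matrix.smul_apply, smul_eq_mul]
        simp [h1, h2]

private lemma conj_mem_C3 (x n : G3') (hx : Shape x) (hn : n ∈ C3) :
    x * n * x⁻¹ ∈ C3 := by
  obtain ⟨hn1, hn2⟩ := hn
  have e00 := conj_entry x n 0 0
  have e01 := conj_entry x n 0 1
  have e10 := conj_entry x n 1 0
  have e11 := conj_entry x n 1 1
  have hdet := det_expand x
  rcases hx with ⟨hb, hc⟩ | ⟨ha0, hd0⟩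
  · -- diagonal case
    simp only [hb, hc] at e00 e01 e10 e11 hdet
    simp only [mul_zero, zero_mul, add_zero, zero_add, sub_zero] at e00 e01 e10 e11 hdet
    obtain ⟨ha, hd⟩ := mul_ne_zero_iff.1 hdet
    have haa := zmod3_sq _ ha
    have hdd := zmod3_sq _ hd
    have h1 : ((x * n * x⁻¹ : G3') : M3') 0 0 = (n : M3') 0 0 :=
      mul_right_cancel₀ ha (by rw [e00]; ring)
    have h2 : ((x * n * x⁻¹ : G3') : M3') 1 1 = (n : M3') 1 1 :=
      mul_right_cancel₀ hd (by rw [e11]; ring)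
    have g1 : ((x * n * x⁻¹ : G3') : M3') 0 0 = ((x * n * x⁻¹ : G3') : M3') 1 1 := by
      rw [h1, h2, hn1]
    have g2 : ((x * n * x⁻¹ : G3') : M3') 0 1 = -((x * n * x⁻¹ : G3') : M3') 1 0 := by
      apply mul_right_cancel₀ (mul_ne_zero ha hd)
      linear_combination (x : M3') 0 0 * e01 + (x : M3') 1 1 * e10
        + (n : M3') 0 1 * haa + (n : M3') 1 0 * hdd + hn2
    exact ⟨g1, g2⟩
  · -- antidiagonal case
    simp only [ha0, hd0] at e00 e01 e10 e11 hdet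
    simp only [mul_zero, zero_mul, add_zero, zero_add, zero_sub, neg_ne_zero]
      at e00 e01 e10 e11 hdet
    obtain ⟨hbne, hcne⟩ := mul_ne_zero_iff.1 hdet
    have hbb := zmod3_sq _ hbne
    have hcc := zmod3_sq _ hcne
    have h1 : ((x * n * x⁻¹ : G3') : M3') 0 0 = (n : M3') 1 1 :=
      mul_right_cancel₀ hbne (by rw [e01]; ring)
    have h2 : ((x * n * x⁻¹ : G3') : M3') 1 1 = (n : M3') 0 0 :=
      mul_right_cancel₀ hcne (by rw [e10]; ring)
    have g1 : ((x * n * x⁻¹ : G3') : M3') 0 0 = ((x * n * x⁻¹ : G3') : M3') 1 1 := by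
      rw [h1, h2, hn1]
    have g2 : ((x * n * x⁻¹ : G3') : M3') 0 1 = -((x * n * x⁻¹ : G3') : M3') 1 0 := by
      apply mul_right_cancel₀ (mul_ne_zero hbne hcne)
      linear_combination (x : M3') 0 1 * e00 + (x : M3') 1 0 * e11
        + (n : M3') 1 0 * hbb + (n : M3') 0 1 * hcc + hn2
    exact ⟨g1, g2⟩

private lemma shape_mem_normalizer (x : G3') (hx : Shape x) : x ∈ Subgroup.normalizer (C3 : Set G3') := by
  rw [Subgroup.mem_normalizer_iff]
  intro n
  constructor
  · exact fun hn => conj_mem_C3 x n hx hn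
  · intro hn
    have h := conj_mem_C3 x⁻¹ (x * n * x⁻¹) (shape_inv x hx) hn
    have key : x⁻¹ * (x * n * x⁻¹) * (x⁻¹)⁻¹ = n := by group
    rwa [key] at h

private def n0 : G3' := ⟨!![1,0;0,-1], !![1,0;0,-1], by decide, by decide⟩

private lemma D3_normalizer_shape (x : G3') (hx : x ∈ Subgroup.normalizer (D3 : Set G3')) : Shape x := by
  have hn0 : n0 ∈ D3 := ⟨rfl, rfl⟩
  obtain ⟨hm01, hm10⟩ := (Subgroup.mem_normalizer_iff.1 hx n0).1 hn0
  have e00 := conj_entry x n0 0 0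
  have e01 := conj_entry x n0 0 1
  have e10 := conj_entry x n0 1 0
  have e11 := conj_entry x n0 1 1
  have hdet := det_expand x
  rw [hm01] at e00 e01
  rw [hm10] at e10 e11
  have k00 : (n0 : M3') 0 0 = 1 := by simp [n0]
  have k01 : (n0 : M3') 0 1 = 0 := by simp [n0]
  have k10 : (n0 : M3') 1 0 = 0 := by simp [n0]
  have k11 : (n0 : M3') 1 1 = -1 := by simp [n0]
  simp only [k00, k01, k10, k11] at e00 e01 e10 e11
  simp only [mul_zero, zero_mul, add_zero, zero_add, mul_one, mul_neg] at e00 e01 e10 e11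
  by_cases ha : (x : M3') 0 0 = 0
  · right
    refine ⟨ha, ?_⟩
    rw [ha] at hdet
    simp only [zero_mul, zero_sub, neg_ne_zero] at hdet
    have hcne : (x : M3') 1 0 ≠ 0 := (mul_ne_zero_iff.1 hdet).2
    have hm11 : ((x * n0 * x⁻¹ : G3') : M3') 1 1 = 1 :=
      mul_right_cancel₀ hcne (by rw [e10]; ring)
    rw [hm11, one_mul] at e11
    exact zmod3_neg_self _ e11
  · left
    have hm00 : ((x * n0 * x⁻¹ : G3') : M3') 0 0 = 1 :=
      mul_right_cancel₀ ha (by rw [e00]; ring)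
    rw [hm00, one_mul] at e01
    have hb : (x : M3') 0 1 = 0 := zmod3_neg_self _ (by linear_combination e01)
    refine ⟨hb, ?_⟩
    rw [hb] at hdet
    simp only [zero_mul, sub_zero] at hdet
    have hdne : (x : M3') 1 1 ≠ 0 := (mul_ne_zero_iff.1 hdet).2
    have hm11 : ((x * n0 * x⁻¹ : G3') : M3') 1 1 = -1 :=
      mul_right_cancel₀ hdne (by rw [e11]; ring)
    rw [hm11] at e10
    exact zmod3_neg_self _ (by linear_combination -e10)

end helpers

/-- The normalizer in `GL₂(𝔽₃)` of the subgroup of diagonal matrices is conjugate in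
`GL₂(𝔽₃)` to a subgroup of the normalizer of the non-split Cartan subgroup. -/
theorem stmt12 :
    ∃ g : Matrix.GeneralLinearGroup (Fin 2) (ZMod 3),
      ∀ x ∈ Subgroup.normalizer (D3 : Set (Matrix.GeneralLinearGroup (Fin 2) (ZMod 3))), g * x * g⁻¹ ∈ Subgroup.normalizer (C3 : Set (Matrix.GeneralLinearGroup (Fin 2) (ZMod 3))) := by
  refine ⟨1, fun x hx => ?_⟩
  simpa using shape_mem_normalizer x (D3_normalizer_shape x hx)
end

section
/- The point (4, 5) lies on the elliptic curve E : y² + y = x³ − x² − 7x + 10 over ℚ and has infinite order in the Mordell–Weil group E(ℚ). In particular, E(ℚ) is infinite. -/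
/-- The elliptic curve `y² + y = x³ − x² − 7x + 10` over `ℚ`
(the modular curve `X` of label `11Nn`). -/
noncomputable def E15 : WeierstrassCurve ℚ :=
  { a₁ := 0, a₂ := -1, a₃ := 1, a₄ := -7, a₆ := 10 }

namespace E15aux

open WeierstrassCurve.Affine WeierstrassCurve

lemma eq_iff (x y : ℚ) : E15.toAffine.Equation x y ↔ y^2 + y = x^3 - x^2 - 7*x + 10 := by
  rw [Affine.equation_iff]
  show y ^ 2 + 0 * x * y + 1 * y = x ^ 3 + (-1) * x ^ 2 + (-7) * x + 10 ↔ _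
  constructor <;> intro h <;> linarith

lemma negY_eq (x y : ℚ) : E15.toAffine.negY x y = -y - 1 := by
  show -y - 0 * x - 1 = _; ring

lemma ns {x y : ℚ} (h : y^2 + y = x^3 - x^2 - 7*x + 10) (h2 : 2*y + 1 ≠ 0) :
    E15.toAffine.Nonsingular x y := by
  rw [Affine.nonsingular_iff, eq_iff]
  refine ⟨h, Or.inr ?_⟩
  show y ≠ -y - 0 * x - 1
  intro hy; apply h2; linarith

lemma ns45 : E15.toAffine.Nonsingular 4 5 := ns (by norm_num) (by norm_num)
lemma ns2 : E15.toAffine.Nonsingular 2 0 := ns (by norm_num) (by norm_num)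
lemma ns4 : E15.toAffine.Nonsingular (-2) 3 := ns (by norm_num) (by norm_num)
lemma ns8 : E15.toAffine.Nonsingular (326/49) (-5188/343) := ns (by norm_num) (by norm_num)

end E15aux

namespace E15aux
open WeierstrassCurve.Affine WeierstrassCurve Affine.Point

lemma a1 : E15.toAffine.a₁ = 0 := rfl
lemma a2 : E15.toAffine.a₂ = -1 := rfl
lemma a3 : E15.toAffine.a₃ = 1 := rfl
lemma a4 : E15.toAffine.a₄ = -7 := rfl

lemma some_congr {x₁ y₁ x₂ y₂ : ℚ} (hx : x₁ = x₂) (hy : y₁ = y₂)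
    (h₁ : E15.toAffine.Nonsingular x₁ y₁) (h₂ : E15.toAffine.Nonsingular x₂ y₂) :
    Point.some _ _ h₁ = Point.some _ _ h₂ := by subst hx; subst hy; rfl

lemma slope_dbl {x y : ℚ} (hy : y ≠ E15.toAffine.negY x y) :
    E15.toAffine.slope x x y y = (3*x^2 - 2*x - 7)/(2*y + 1) := by
  rw [Affine.slope_of_Y_ne rfl hy, negY_eq, a1, a2, a4]
  ring_nf

lemma P2eq : Point.some _ _ ns45 + Point.some _ _ ns45 = Point.some _ _ ns2 := by
  have hy : (5:ℚ) ≠ E15.toAffine.negY 4 5 := by rw [negY_eq]; norm_num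
  rw [Point.add_self_of_Y_ne hy]
  have hs : E15.toAffine.slope 4 4 5 5 = 3 := by rw [slope_dbl hy]; norm_num
  exact some_congr (by rw [Affine.addX, hs, a1, a2]; norm_num)
    (by rw [Affine.addY, Affine.negAddY, Affine.addX, hs, a1, a2, negY_eq]; norm_num) _ _

end E15aux

namespace E15aux
open WeierstrassCurve.Affine WeierstrassCurve Affine.Point

lemma P4eq : Point.some _ _ ns2 + Point.some _ _ ns2 = Point.some _ _ ns4 := by
  have hy : (0:ℚ) ≠ E15.toAffine.negY 2 0 := by rw [negY_eq]; norm_num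
  rw [Point.add_self_of_Y_ne hy]
  have hs : E15.toAffine.slope 2 2 0 0 = 1 := by rw [slope_dbl hy]; norm_num
  exact some_congr (by rw [Affine.addX, hs, a1, a2]; norm_num)
    (by rw [Affine.addY, Affine.negAddY, Affine.addX, hs, a1, a2, negY_eq]; norm_num) _ _

lemma P8eq : Point.some _ _ ns4 + Point.some _ _ ns4 = Point.some _ _ ns8 := by
  have hy : (3:ℚ) ≠ E15.toAffine.negY (-2) 3 := by rw [negY_eq]; norm_num
  rw [Point.add_self_of_Y_ne hy]
  have hs : E15.toAffine.slope (-2) (-2) 3 3 = 9/7 := by rw [slope_dbl hy]; norm_num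
  exact some_congr (by rw [Affine.addX, hs, a1, a2]; norm_num)
    (by rw [Affine.addY, Affine.negAddY, Affine.addX, hs, a1, a2, negY_eq]; norm_num) _ _

end E15aux

namespace E15aux
open WeierstrassCurve.Affine WeierstrassCurve Affine.Point

lemma not7 {m : ℤ} (h : ((m : ZMod 7)) ≠ 0) : ¬(7:ℤ) ∣ m :=
  fun hd => h ((ZMod.intCast_zmod_eq_zero_iff_dvd m 7).2 hd)

lemma dvd7 {m : ℤ} (h : ¬(7:ℤ) ∣ m) : ((m : ZMod 7)) ≠ 0 :=
  fun h0 => h ((ZMod.intCast_zmod_eq_zero_iff_dvd m 7).1 h0)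

/-- points whose x-coordinate has 7-adic valuation exactly -2 (denominator 49). -/
def Good (Q : E15.toAffine.Point) : Prop :=
  ∃ (x y : ℚ) (h : E15.toAffine.Nonsingular x y) (c d : ℤ),
    Q = Point.some _ _ h ∧ ¬(7:ℤ) ∣ c ∧ ¬(7:ℤ) ∣ d ∧ x * (49*c) = (d:ℚ)

lemma good8 : Good (Point.some _ _ ns8) :=
  ⟨326/49, -5188/343, ns8, 1, 326, rfl, by decide, by decide, by norm_num⟩

end E15aux

namespace E15aux
open WeierstrassCurve.Affine WeierstrassCurve Affine.Point

lemma seven_dvd {d a m : ℤ} (n : ℕ) (ha : ¬(7:ℤ) ∣ a) (h : (7:ℤ) ∣ a*d^n + 7*m) :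
    (7:ℤ) ∣ d := by
  have hp : Prime (7:ℤ) := by norm_num
  have h1 : (7:ℤ) ∣ a*d^n := by simpa using h.sub (dvd_mul_right 7 m)
  rcases hp.dvd_mul.mp h1 with h' | h'
  · exact absurd h' ha
  · exact hp.dvd_of_dvd_pow h'

set_option maxHeartbeats 1000000 in
lemma good_step {Q : E15.toAffine.Point} (hQ : Good Q) : Good (Q + Q) := by
  obtain ⟨x, y, h, c, d, rfl, hc, hd, hxd⟩ := hQ
  have heq : y^2 + y = x^3 - x^2 - 7*x + 10 :=
    (eq_iff x y).1 ((E15.toAffine.nonsingular_iff x y).1 h).1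
  have hdq : ((d:ℚ)) = x*(49*c) := hxd.symm
  -- y is not the negated y, else 7 ∣ d
  have hy : y ≠ E15.toAffine.negY x y := by
    rw [negY_eq]
    intro h0
    have hyv : y = -1/2 := by linarith
    have hcubic : 4*x^3 - 4*x^2 - 28*x + 41 = 0 := by rw [hyv] at heq; linarith
    have keyQ : (4*(d:ℚ)^3 - 4*d^2*(49*c) - 28*d*(49*c)^2 + 41*(49*c)^3) = 0 := by
      rw [hdq]; linear_combination (49*(c:ℚ))^3 * hcubic
    have keyZ : 4*d^3 - 4*d^2*(49*c) - 28*d*(49*c)^2 + 41*(49*c)^3 = 0 := by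
      exact_mod_cast keyQ
    refine hd <| seven_dvd (a := 4) (m := 0) 3 (by norm_num) ?_
    exact ⟨28*c*d^2 + 9604*d*c^2 - 689087*c^3, by linarith⟩
  refine ⟨_, _, nonsingular_add h h (fun hc => hy hc.2), ?_⟩
  have h2y : (2*y + 1) ≠ 0 := by
    intro h0; exact hy (by rw [negY_eq]; linarith)
  have hLm : E15.toAffine.slope x x y y * (2*y+1) = 3*x^2 - 2*x - 7 := by
    rw [slope_dbl hy]; field_simp
  have hD : (2*y+1)^2 = 4*x^3 - 4*x^2 - 28*x + 41 := by linear_combination 4*heq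
  have hprod : E15.toAffine.addX x x (E15.toAffine.slope x x y y) * (2*y+1)^2 = x^4 + 14*x^2 - 82*x + 90 := by
    rw [Affine.addX, a1, a2]
    have h1 : (E15.toAffine.slope x x y y^2 + 0*E15.toAffine.slope x x y y - (-1) - x - x) * (2*y+1)^2
        = (E15.toAffine.slope x x y y*(2*y+1))^2 + (1-2*x)*((2*y+1)^2) := by ring
    rw [h1, hLm, hD]; ring
  refine ⟨c * (4*d^3 - 4*d^2*(49*c) - 28*d*(49*c)^2 + 41*(49*c)^3),
          d^4 + 14*d^2*(49*c)^2 - 82*d*(49*c)^3 + 90*(49*c)^4,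
          Point.add_self_of_Y_ne hy, ?_, ?_, ?_⟩
  · -- 7 ∤ c * Dz
    intro hdvd
    have hp : Prime (7:ℤ) := by norm_num
    rcases hp.dvd_mul.mp hdvd with h' | h'
    · exact hc h'
    · refine hd (seven_dvd (a := 4) (m := -28*c*d^2 - 9604*d*c^2 + 689087*c^3) 3 (by norm_num) ?_)
      obtain ⟨k, hk⟩ := h'
      exact ⟨k, by linarith⟩
  · -- 7 ∤ Nz
    intro hdvd
    refine hd (seven_dvd (a := 1) (m := 4802*d^2*c^2 - 1378174*d*c^3 + 74118870*c^4) 4 (by norm_num) ?_)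
    obtain ⟨k, hk⟩ := hdvd
    exact ⟨k, by linarith⟩
  · -- the coordinate identity
    push_cast
    have hDzq : (4*(d:ℚ)^3 - 4*(d:ℚ)^2*(49*(c:ℚ)) - 28*(d:ℚ)*(49*(c:ℚ))^2 + 41*(49*(c:ℚ))^3)
        = (49*(c:ℚ))^3 * (2*y+1)^2 := by
      rw [hdq, hD]; ring
    calc E15.toAffine.addX x x (E15.toAffine.slope x x y y) *
          (49 * ((c:ℚ) * (4*(d:ℚ)^3 - 4*(d:ℚ)^2*(49*(c:ℚ)) - 28*(d:ℚ)*(49*(c:ℚ))^2 + 41*(49*(c:ℚ))^3)))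
        = (49*(c:ℚ))^4 * (E15.toAffine.addX x x (E15.toAffine.slope x x y y) * (2*y+1)^2) := by rw [hDzq]; ring
      _ = (49*(c:ℚ))^4 * (x^4 + 14*x^2 - 82*x + 90) := by rw [hprod]
      _ = _ := by rw [hdq]; ring

end E15aux

namespace E15aux
open WeierstrassCurve.Affine WeierstrassCurve Affine.Point

lemma good_pow (m : ℕ) {Q : E15.toAffine.Point} (hQ : Good Q) : Good ((2^m) • Q) := by
  induction m with
  | zero => simpa using hQ
  | succ k ih =>
      have h2 : (2:ℕ)^(k+1) = 2^k + 2^k := by ring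
      rw [h2, add_nsmul]
      exact good_step ih

/-- no rational 2-torsion: `4x³-4x²-28x+41` has no rational root -/
lemma no2 (x y : ℚ) (heq : y^2 + y = x^3 - x^2 - 7*x + 10) (h0 : y = -y - 1) : False := by
  have hyv : y = -1/2 := by linarith
  have hcubic : 4*x^3 - 4*x^2 - 28*x + 41 = 0 := by rw [hyv] at heq; linarith
  have hnum : ((x.num : ℚ)) = x * (x.den : ℚ) := by
    rw [Rat.mul_den_eq_num]
  have keyQ : 4*(x.num:ℚ)^3 - 4*(x.num:ℚ)^2*(x.den:ℚ) - 28*(x.num:ℚ)*(x.den:ℚ)^2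
      + 41*(x.den:ℚ)^3 = 0 := by
    rw [hnum]; linear_combination ((x.den:ℚ))^3 * hcubic
  set a : ℤ := x.num with ha
  set b : ℤ := (x.den : ℤ) with hb
  have keyZ : 4*a^3 - 4*a^2*b - 28*a*b^2 + 41*b^3 = 0 := by exact_mod_cast keyQ
  have hp2 : Prime (2:ℤ) := Int.prime_two
  have h2b : (2:ℤ) ∣ b := by
    have h1 : (2:ℤ) ∣ 41 * b^3 := ⟨-2*a^3 + 2*a^2*b + 14*a*b^2, by linarith⟩
    rcases hp2.dvd_mul.mp h1 with h' | h'
    · norm_num at h'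
    · exact hp2.dvd_of_dvd_pow h'
  obtain ⟨b', hb'⟩ := h2b
  have h2a : (2:ℤ) ∣ a := by
    have h1 : (2:ℤ) ∣ a^3 := by
      refine ⟨a^2*b' + 14*a*b'^2 - 41*b'^3, ?_⟩
      have : 4*a^3 - 8*a^2*b' - 112*a*b'^2 + 328*b'^3 = 0 := by
        rw [hb'] at keyZ; linarith
      linarith
    exact hp2.dvd_of_dvd_pow h1
  have hcop : Nat.Coprime x.num.natAbs x.den := x.reduced
  have hna : 2 ∣ x.num.natAbs := by
    have := Int.natAbs_dvd_natAbs.2 h2a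
    simpa using this
  have hnb : 2 ∣ x.den := by
    have : (2:ℤ) ∣ (x.den : ℤ) := ⟨b', hb'⟩
    exact_mod_cast this
  have := Nat.dvd_gcd hna hnb
  rw [Nat.Coprime] at hcop
  rw [hcop] at this
  norm_num at this

end E15aux

namespace E15aux
open WeierstrassCurve.Affine WeierstrassCurve Affine.Point

lemma not_fin : ¬ IsOfFinAddOrder (Point.some _ _ ns45) := by
  intro hfin
  set P : E15.toAffine.Point := Point.some _ _ ns45 with hP
  have npos : 0 < addOrderOf P := hfin.addOrderOf_pos
  set n : ℕ := addOrderOf P with hn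
  -- n is odd
  have hodd : ¬ 2 ∣ n := by
    rintro ⟨m, hm⟩
    have hm0 : 0 < m := by omega
    have hTne : m • P ≠ 0 := by
      intro h0
      have := Nat.le_of_dvd hm0 (addOrderOf_dvd_of_nsmul_eq_zero h0)
      omega
    have h2T : m • P + m • P = 0 := by
      rw [← two_nsmul, ← mul_nsmul', ← hm]
      exact addOrderOf_nsmul_eq_zero P
    rcases hT : m • P with _ | @⟨xT, yT, hTns⟩
    · exact hTne hT
    · rw [hT] at h2T
      by_cases hyT : yT = E15.toAffine.negY xT yT
      · refine no2 xT yT ((eq_iff xT yT).1 ((E15.toAffine.nonsingular_iff xT yT).1 hTns).1) ?_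
        rw [negY_eq] at hyT; exact hyT
      · rw [Point.add_self_of_Y_ne hyT] at h2T
        exact Point.some_ne_zero _ h2T
  have hcop : Nat.Coprime 2 n := (Nat.prime_two.coprime_iff_not_dvd).2 hodd
  have htot : 0 < n.totient := Nat.totient_pos.2 npos
  set j : ℕ := n.totient * 3 with hj
  have hj3 : 3 ≤ j := by omega
  have hmod : 2^j ≡ 1 [MOD n] := by
    have h1 := Nat.ModEq.pow_totient hcop
    calc 2^j = (2^n.totient)^3 := by rw [pow_mul]
      _ ≡ 1^3 [MOD n] := h1.pow 3
      _ = 1 := one_pow 3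
  have h2j1 : 1 ≤ 2^j := Nat.one_le_two_pow
  have hdvd : n ∣ 2^j - 1 := (Nat.modEq_iff_dvd' h2j1).1 hmod.symm
  have hPj : (2^j) • P = P := by
    have h1 : (2^j - 1) • P = 0 := by
      rw [hn] at hdvd
      exact (addOrderOf_dvd_iff_nsmul_eq_zero).1 hdvd
    calc (2^j) • P = ((2^j - 1) + 1) • P := by rw [Nat.sub_add_cancel h2j1]
      _ = (2^j - 1) • P + 1 • P := add_nsmul P _ 1
      _ = P := by rw [h1, one_nsmul, zero_add]
  -- compute 8 • P
  have e2 : (2:ℕ) • P = Point.some _ _ ns2 := by rw [two_nsmul]; exact P2eq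
  have e4 : (4:ℕ) • P = Point.some _ _ ns4 := by
    rw [show (4:ℕ) = 2*2 from rfl, mul_nsmul', e2, two_nsmul]; exact P4eq
  have e8 : (8:ℕ) • P = Point.some _ _ ns8 := by
    rw [show (8:ℕ) = 2*4 from rfl, mul_nsmul', e4, two_nsmul]; exact P8eq
  have hgood8 : Good ((2:ℕ)^3 • P) := by
    rw [show ((2:ℕ)^3) = 8 from rfl, e8]; exact good8
  have hgoodj : Good ((2:ℕ)^j • P) := by
    have hsplit : (2:ℕ)^j = 2^(j-3) * 2^3 := by
      rw [← pow_add]; congr 1; omega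
    rw [hsplit, mul_nsmul']
    exact good_pow _ hgood8
  rw [hPj] at hgoodj
  obtain ⟨x, y, hxy, c, d, hPeq, hc, hd, hxd⟩ := hgoodj
  rw [hP] at hPeq
  simp only [Point.some.injEq] at hPeq
  obtain ⟨hx4, hy5⟩ := hPeq
  rw [← hx4] at hxd
  have : (196*c : ℚ) = (d:ℚ) := by linarith
  have hZ : 196*c = d := by exact_mod_cast this
  exact hd ⟨28*c, by linarith⟩

end E15aux


/-- The point `(4, 5)` lies on `E : y² + y = x³ − x² − 7x + 10` and has infinite order in
`E(ℚ)`; in particular `E(ℚ)` is infinite. -/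
theorem stmt15 :
    ∃ h : E15.toAffine.Nonsingular 4 5,
      ¬ IsOfFinAddOrder (WeierstrassCurve.Affine.Point.some _ _ h) ∧
        Infinite E15.toAffine.Point := by
  refine ⟨E15aux.ns45, E15aux.not_fin, ?_⟩
  rw [← not_finite_iff_infinite]
  intro hfin
  exact E15aux.not_fin (isOfFinAddOrder_of_finite _)
end
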